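/- arXiv:1708.05046 — 4 statements merged into one kernel-verified Lean document; each statement's English description precedes it below -/
import Mathlib

section
/- Let Δ be a positive self-adjoint operator with discrete spectrum consisting of eigenvalues λ_1 ≤ λ_2 ≤ ... (with multiplicity), such that tr e^{-tΔ} = ∑_n e^{-tλ_n} < ∞ for all t > 0 and tr e^{-tΔ} = O(t^{-s_0}) as t → 0⁺ for some s_0 ∈ ℝ. Let F : (0,∞) → ℝ satisfy F(s) = O(s^{-1} e^{-s}) as s → ∞. Fix s_k < s_0 and m > s_0 - s_k, and set ε(Λ) = m log Λ / Λ. Then ∑_{λ_n > Λ} F(λ_n ε(Λ)) = o(ε(Λ)^{-s_k}) as Λ → ∞. -/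
open MeasureTheory Filter Asymptotics Set Real Topology

/-!
For `Λ < λ` we have `λ ε ≥ Λ ε = m log Λ`. Splitting `e^{-λε} = e^{-θλε} e^{-(1-θ)λε}` with
`0 ≤ θ < 1` therefore bounds each term of the tail by `C Λ^{-θm} e^{-(1-θ)ελ}`, so the tail is
`O(Λ^{-θm} tr e^{-(1-θ)εΔ}) = O(Λ^{-θm} ε^{-s₀})`. Dividing by `ε^{-s_k}` leaves
`(m log Λ)^{s_k-s₀} Λ^{s₀-s_k-θm}`, which tends to `0` once `θ m > s₀ - s_k`; such a `θ < 1`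
exists because `m > s₀ - s_k`.
-/

theorem isBigO_inv_mul_exp_neg :
    (fun s : ℝ => s⁻¹ * exp (-s)) =O[atTop] fun s => exp (-s) := by
  simpa using (tendsto_inv_atTop_zero.isBigO_one ℝ).mul (isBigO_refl (fun s => exp (-s)) atTop)

theorem exp_neg_mul_le_of_le {x Λ ε θ : ℝ} (hθ : 0 ≤ θ) (hε : 0 ≤ ε) (hx : Λ ≤ x) :
    exp (-(x * ε)) ≤ exp (-(θ * (Λ * ε))) * exp (-((1 - θ) * ε * x)) := by
  rw [← exp_add]
  exact exp_le_exp.mpr (by nlinarith [mul_nonneg hθ (mul_nonneg (sub_nonneg.2 hx) hε)])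

theorem norm_tsum_tail_le {lam : ℕ → ℝ} {G : ℝ → ℝ} {C s₁ Λ ε θ : ℝ}
    (hG : ∀ s, s₁ ≤ s → ‖G s‖ ≤ C * exp (-s)) (hC : 0 ≤ C)
    (hsum : Summable fun n => exp (-((1 - θ) * ε * lam n)))
    (hθ : 0 ≤ θ) (hε : 0 ≤ ε) (hΛ : s₁ ≤ Λ * ε) :
    ‖∑' n, if Λ < lam n then G (lam n * ε) else 0‖ ≤
      C * exp (-(θ * (Λ * ε))) * ∑' n, exp (-((1 - θ) * ε * lam n)) := by
  refine tsum_of_norm_bounded (hsum.hasSum.mul_left _) fun n => ?_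
  split_ifs with hn
  · calc ‖G (lam n * ε)‖ ≤ C * exp (-(lam n * ε)) :=
          hG _ (hΛ.trans (mul_le_mul_of_nonneg_right hn.le hε))
      _ ≤ C * (exp (-(θ * (Λ * ε))) * exp (-((1 - θ) * ε * lam n))) :=
          mul_le_mul_of_nonneg_left (exp_neg_mul_le_of_le hθ hε hn.le) hC
      _ = _ := (mul_assoc ..).symm
  · rw [norm_zero]
    positivity

theorem isBigO_tsum_tail {lam : ℕ → ℝ} {G ε : ℝ → ℝ} {θ : ℝ}
    (hG : G =O[atTop] fun s => exp (-s))
    (hsum : ∀ t, 0 < t → Summable fun n => exp (-(t * lam n)))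
    (hθ : 0 ≤ θ) (hθ1 : θ < 1) (hε : ∀ᶠ Λ in atTop, 0 < ε Λ)
    (hΛε : Tendsto (fun Λ => Λ * ε Λ) atTop atTop) :
    (fun Λ => ∑' n, if Λ < lam n then G (lam n * ε Λ) else 0) =O[atTop]
      fun Λ => exp (-(θ * (Λ * ε Λ))) * ∑' n, exp (-((1 - θ) * ε Λ * lam n)) := by
  obtain ⟨C, hC, hGC⟩ := hG.exists_pos
  obtain ⟨s₁, hs₁⟩ := eventually_atTop.mp hGC.bound
  refine IsBigO.of_bound C ?_
  filter_upwards [hε, hΛε.eventually_ge_atTop s₁] with Λ hεΛ hΛ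
  have hZ := hsum _ (mul_pos (sub_pos.2 hθ1) hεΛ)
  refine (norm_tsum_tail_le (fun s hs => ?_) hC.le hZ hθ hεΛ.le hΛ).trans_eq ?_
  · simpa using hs₁ s hs
  · rw [norm_mul, norm_of_nonneg (exp_pos _).le,
      norm_of_nonneg (tsum_nonneg fun n => (exp_pos _).le), mul_assoc]

theorem tendsto_mul_log_div_self_nhdsGT_zero {m : ℝ} (hm : 0 < m) :
    Tendsto (fun Λ => m * log Λ / Λ) atTop (𝓝[>] 0) := by
  refine tendsto_nhdsWithin_iff.2 ⟨?_, ?_⟩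
  · simpa [mul_div_assoc] using isLittleO_log_id_atTop.tendsto_div_nhds_zero.const_mul m
  · filter_upwards [eventually_gt_atTop 1] with Λ hΛ
    exact div_pos (mul_pos hm (log_pos hΛ)) (by linarith)

theorem exp_mul_rpow_mul_log_div_self_eq {m θ s₀ sk a Λ : ℝ} (hm : 0 < m) (ha : 0 < a)
    (hΛ : 1 < Λ) :
    exp (-(θ * (Λ * (m * log Λ / Λ)))) * (a * (m * log Λ / Λ)) ^ (-s₀) =
      a ^ (-s₀) * ((m * log Λ) ^ (sk - s₀) * Λ ^ (s₀ - sk - θ * m)) *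
        (m * log Λ / Λ) ^ (-sk) := by
  have hΛ0 : 0 < Λ := by linarith
  have hL : 0 < m * log Λ := mul_pos hm (log_pos hΛ)
  have hε : 0 < m * log Λ / Λ := div_pos hL hΛ0
  have hlogε : log (m * log Λ / Λ) = log (m * log Λ) - log Λ := log_div hL.ne' hΛ0.ne'
  have hΛε : Λ * (m * log Λ / Λ) = m * log Λ := by field_simp
  simp only [rpow_def_of_pos (mul_pos ha hε), rpow_def_of_pos ha, rpow_def_of_pos hL,
    rpow_def_of_pos hΛ0, rpow_def_of_pos hε, ← exp_add, log_mul ha.ne' hε.ne', hlogε, hΛε]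
  congr 1
  ring

theorem isLittleO_exp_mul_rpow_mul_log_div_self {m θ s₀ sk a : ℝ} (hm : 0 < m) (hsk : sk < s₀)
    (hθm : s₀ - sk < θ * m) (ha : 0 < a) :
    (fun Λ => exp (-(θ * (Λ * (m * log Λ / Λ)))) * (a * (m * log Λ / Λ)) ^ (-s₀))
      =o[atTop] fun Λ => (m * log Λ / Λ) ^ (-sk) := by
  have hlog : Tendsto (fun Λ => (m * log Λ) ^ (sk - s₀)) atTop (𝓝 0) := by
    simpa [neg_sub, Function.comp_def] using
      (tendsto_rpow_neg_atTop (sub_pos.2 hsk)).comp (tendsto_log_atTop.const_mul_atTop hm)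
  have hpow := tendsto_rpow_neg_atTop (sub_pos.2 hθm)
  refine isLittleO_iff_exists_eq_mul.2
    ⟨fun Λ => a ^ (-s₀) * ((m * log Λ) ^ (sk - s₀) * Λ ^ (s₀ - sk - θ * m)), ?_, ?_⟩
  · simpa using (hlog.mul hpow).const_mul (a ^ (-s₀))
  · filter_upwards [eventually_gt_atTop 1] with Λ hΛ
    exact exp_mul_rpow_mul_log_div_self_eq hm ha hΛ

theorem tail_sum_estimate_general
    (lam : ℕ → ℝ)
    (hsum : ∀ t : ℝ, 0 < t → Summable fun n => Real.exp (-(t * lam n)))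
    (s₀ : ℝ)
    (htrace : (fun t : ℝ => ∑' n, Real.exp (-(t * lam n)))
        =O[𝓝[>] (0 : ℝ)] fun t : ℝ => t ^ (-s₀))
    (F : ℝ → ℝ)
    (hF : F =O[atTop] fun s : ℝ => s⁻¹ * Real.exp (-s))
    (sk : ℝ) (hsk : sk < s₀) (m : ℝ) (hm : s₀ - sk < m) :
    (fun Λ : ℝ =>
        ∑' n, if Λ < lam n then F (lam n * (m * Real.log Λ / Λ)) else 0)
      =o[atTop] fun Λ : ℝ => (m * Real.log Λ / Λ) ^ (-sk) := by
  have hm0 : 0 < m := by linarith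
  set θ := (s₀ - sk + m) / (2 * m)
  have hθ : 0 ≤ θ := div_nonneg (by linarith) (by linarith)
  have hθ1 : θ < 1 := (div_lt_one (by positivity)).2 (by linarith)
  have hθm : s₀ - sk < θ * m := by
    rw [div_mul_eq_mul_div, lt_div_iff₀ (by positivity)]
    nlinarith
  set ε := fun Λ : ℝ => m * log Λ / Λ
  have hε := tendsto_mul_log_div_self_nhdsGT_zero hm0
  have hΛε : Tendsto (fun Λ => Λ * ε Λ) atTop atTop :=
    (tendsto_log_atTop.const_mul_atTop hm0).congr' <| by
      filter_upwards [eventually_ne_atTop 0] with Λ hΛ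
      exact (mul_div_cancel₀ _ hΛ).symm
  have hεθ : Tendsto (fun Λ => (1 - θ) * ε Λ) atTop (𝓝[>] 0) :=
    (tendsto_mul_log_div_self_nhdsGT_zero (mul_pos (sub_pos.2 hθ1) hm0)).congr fun Λ => by
      simp only [ε]; ring
  calc _ =O[atTop] fun Λ => exp (-(θ * (Λ * ε Λ))) * ∑' n, exp (-((1 - θ) * ε Λ * lam n)) :=
        isBigO_tsum_tail (hF.trans isBigO_inv_mul_exp_neg) hsum hθ hθ1
          (hε.eventually self_mem_nhdsWithin) hΛε
    _ =O[atTop] fun Λ => exp (-(θ * (Λ * ε Λ))) * ((1 - θ) * ε Λ) ^ (-s₀) :=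
        (isBigO_refl _ _).mul (htrace.comp_tendsto hεθ)
    _ =o[atTop] _ := isLittleO_exp_mul_rpow_mul_log_div_self hm0 hsk hθm (sub_pos.2 hθ1)

theorem tail_sum_estimate
    (lam : ℕ → ℝ) (hlam_mono : Monotone lam) (hlam_pos : ∀ n, 0 < lam n)
    (hlam_top : Tendsto lam atTop atTop)
    (hsum : ∀ t : ℝ, 0 < t → Summable fun n => Real.exp (-(t * lam n)))
    (s₀ : ℝ)
    (htrace : (fun t : ℝ => ∑' n, Real.exp (-(t * lam n)))
        =O[𝓝[>] (0 : ℝ)] fun t : ℝ => t ^ (-s₀))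
    (F : ℝ → ℝ)
    (hF : F =O[atTop] fun s : ℝ => s⁻¹ * Real.exp (-s))
    (sk : ℝ) (hsk : sk < s₀) (m : ℝ) (hm : s₀ - sk < m) :
    (fun Λ : ℝ =>
        ∑' n, if Λ < lam n then F (lam n * (m * Real.log Λ / Λ)) else 0)
      =o[atTop] fun Λ : ℝ => (m * Real.log Λ / Λ) ^ (-sk) :=
  tail_sum_estimate_general lam hsum s₀ htrace F hF sk hsk m hm
end

section
/- Let (λ_n) be a nondecreasing sequence of positive reals tending to ∞ with ∑_n e^{-tλ_n} < ∞ for all t > 0, and suppose ∑_n e^{-tλ_n} admits an asymptotic expansion ∑_{i=0}^k c_i t^{-s_i} + O(t^{-s_{k+1}}) as t → 0⁺, with s_0 > ... > s_k > s_{k+1} reals. Let f be piecewise continuous, supported in [1,∞), rapidly decaying at ∞, with ∫_0^∞ t^{-s_i} f(t) dt = 0 for i < k and ∫_0^∞ t^{-s_k} f(t) dt = 1, and let F be its Laplace transform. Then with ε(Λ) = m log Λ / Λ for any fixed m > s_0 - s_k, one has lim_{Λ→∞} ε(Λ)^{s_k} ∑_{0 < λ_n ≤ Λ} F(λ_n ε(Λ))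 = c_k. -/
open MeasureTheory Filter Asymptotics Set Real Topology

def PiecewiseContinuous (f : ℝ → ℝ) : Prop :=
  ∀ a b : ℝ, {x ∈ Set.Icc a b | ¬ ContinuousAt f x}.Finite

lemma pc_aesm {f : ℝ → ℝ} (hf : PiecewiseContinuous f) :
    AEStronglyMeasurable f (volume : Measure ℝ) := by
  set D := {x : ℝ | ¬ ContinuousAt f x} with hD
  have hcount : D.Countable := by
    have hsub : D ⊆ ⋃ n : ℕ, {x ∈ Set.Icc (-(n:ℝ)) n | ¬ ContinuousAt f x} := by
      intro x hx
      refine Set.mem_iUnion.2 ⟨⌈|x|⌉₊, ⟨?_, hx⟩⟩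
      constructor
      · have := Nat.le_ceil |x|
        have h1 : -|x| ≤ x := neg_abs_le x
        linarith [Nat.le_ceil |x|]
      · have := Nat.le_ceil |x|
        have h1 : x ≤ |x| := le_abs_self x
        linarith
    exact Set.Countable.mono hsub (Set.countable_iUnion (fun n => (hf _ _).countable))
  have hnull : volume D = 0 := hcount.measure_zero _
  have hmeas : MeasurableSet Dᶜ := hcount.measurableSet.compl
  have hcont : ContinuousOn f Dᶜ := fun x hx => (not_not.mp hx).continuousWithinAt
  have : AEMeasurable f (volume.restrict Dᶜ) := hcont.aemeasurable hmeas
  rw [Measure.restrict_eq_self_of_ae_mem] at this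
  · exact this.aestronglyMeasurable
  · exact (MeasureTheory.ae_iff).2 (by simpa using hnull)

lemma rpow_meas (b : ℝ) : Measurable (fun t : ℝ => t ^ b) := by fun_prop

lemma weight_integrable {f : ℝ → ℝ} (hfm : AEStronglyMeasurable f (volume : Measure ℝ))
    (hf_supp : ∀ t : ℝ, t < 1 → f t = 0)
    (hf_decay : ∀ m : ℝ, f =O[atTop] fun t : ℝ => t ^ (-m))
    {s0 : ℝ} (hbase : IntegrableOn (fun t => t ^ s0 * f t) (Ioi (0:ℝ)) volume)
    (b : ℝ) : IntegrableOn (fun t => t ^ b * f t) (Ioi (0:ℝ)) volume := by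
  obtain ⟨C, hC⟩ := (hf_decay (b + 2)).bound
  rw [eventually_atTop] at hC
  obtain ⟨T₀, hT₀⟩ := hC
  set T : ℝ := max T₀ 1 with hTdef
  have hT1 : (1:ℝ) ≤ T := le_max_right _ _
  have hTpos : (0:ℝ) < T := lt_of_lt_of_le one_pos hT1
  have hmeas : AEStronglyMeasurable (fun t : ℝ => t ^ b * f t) (volume : Measure ℝ) :=
    (rpow_meas b).aestronglyMeasurable.mul hfm
  have h1 : IntegrableOn (fun t => t ^ b * f t) (Ioc (0:ℝ) T) volume := by
    refine Integrable.mono' (((hbase.mono_set Ioc_subset_Ioi_self).norm).const_mul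
      (T ^ |b - s0|)) (hmeas.restrict) ?_
    filter_upwards [ae_restrict_mem measurableSet_Ioc] with t ht
    rcases lt_or_ge t 1 with h | h
    · rw [hf_supp t h]
      simp only [mul_zero, norm_zero]
      positivity
    · have htpos : (0:ℝ) < t := lt_of_lt_of_le one_pos h
      have key : t ^ b = t ^ (b - s0) * t ^ s0 := by
        rw [← Real.rpow_add htpos]; ring_nf
      have h2' : t ^ (b - s0) ≤ T ^ |b - s0| := by
        calc t ^ (b - s0) ≤ t ^ |b - s0| :=
              Real.rpow_le_rpow_of_exponent_le h (le_abs_self _)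
          _ ≤ T ^ |b - s0| := Real.rpow_le_rpow htpos.le ht.2 (abs_nonneg _)
      calc ‖t ^ b * f t‖ = t ^ (b - s0) * ‖t ^ s0 * f t‖ := by
            rw [key, mul_assoc, norm_mul,
              Real.norm_of_nonneg (Real.rpow_nonneg htpos.le _)]
        _ ≤ T ^ |b - s0| * ‖t ^ s0 * f t‖ :=
            mul_le_mul_of_nonneg_right h2' (norm_nonneg _)
  have h2 : IntegrableOn (fun t => t ^ b * f t) (Ioi T) volume := by
    refine Integrable.mono' (((integrableOn_Ioi_rpow_of_lt (by norm_num : (-2:ℝ) < -1)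
      hTpos).const_mul |C|)) (hmeas.restrict) ?_
    filter_upwards [ae_restrict_mem measurableSet_Ioi] with t ht
    have htT : T ≤ t := le_of_lt ht
    have ht1 : (1:ℝ) ≤ t := le_trans hT1 htT
    have htpos : (0:ℝ) < t := lt_of_lt_of_le one_pos ht1
    have hft : ‖f t‖ ≤ |C| * t ^ (-(b+2)) := by
      have := hT₀ t (le_trans (le_max_left _ _) htT)
      calc ‖f t‖ ≤ C * ‖t ^ (-(b+2))‖ := this
        _ ≤ |C| * ‖t ^ (-(b+2))‖ := mul_le_mul_of_nonneg_right (le_abs_self _) (norm_nonneg _)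
        _ = |C| * t ^ (-(b+2)) := by
            rw [Real.norm_of_nonneg (Real.rpow_nonneg htpos.le _)]
    calc ‖t ^ b * f t‖ = t ^ b * ‖f t‖ := by
          rw [norm_mul, Real.norm_of_nonneg (Real.rpow_nonneg htpos.le _)]
      _ ≤ t ^ b * (|C| * t ^ (-(b+2))) :=
          mul_le_mul_of_nonneg_left hft (Real.rpow_nonneg htpos.le _)
      _ = |C| * t ^ (-2 : ℝ) := by
          rw [← mul_assoc, mul_comm (t ^ b) |C|, mul_assoc, ← Real.rpow_add htpos]
          ring_nf
  have := h1.union h2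
  rwa [Ioc_union_Ioi_eq_Ioi hTpos.le] at this

lemma tail_int {f : ℝ → ℝ}
    (hIb : ∀ b : ℝ, IntegrableOn (fun t => t ^ b * |f t|) (Ioi (0:ℝ)) volume)
    {a A : ℝ} (b : ℝ) (ha : 0 < a) (hA : 0 < A) :
    ∫ t in Ioi A, t ^ b * |f t| ≤ A ^ (-a) * ∫ t in Ioi (0:ℝ), t ^ (a+b) * |f t| := by
  have hint1 : IntegrableOn (fun t => t ^ b * |f t|) (Ioi A) volume :=
    (hIb b).mono_set (Ioi_subset_Ioi hA.le)
  have hint2 : IntegrableOn (fun t => A ^ (-a) * (t ^ (a+b) * |f t|)) (Ioi A) volume :=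
    ((hIb (a+b)).mono_set (Ioi_subset_Ioi hA.le)).const_mul _
  have step1 : ∫ t in Ioi A, t ^ b * |f t| ≤ ∫ t in Ioi A, A ^ (-a) * (t ^ (a+b) * |f t|) := by
    refine setIntegral_mono_on hint1 hint2 measurableSet_Ioi ?_
    intro t ht
    have htpos : (0:ℝ) < t := lt_trans hA ht
    have key : t ^ b = t ^ (-a) * t ^ (a+b) := by
      rw [← Real.rpow_add htpos]; ring_nf
    have h1 : t ^ (-a) ≤ A ^ (-a) :=
      Real.rpow_le_rpow_of_nonpos hA (le_of_lt ht) (neg_nonpos.2 ha.le)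
    calc t ^ b * |f t| = t ^ (-a) * (t ^ (a+b) * |f t|) := by rw [key]; ring
      _ ≤ A ^ (-a) * (t ^ (a+b) * |f t|) :=
          mul_le_mul_of_nonneg_right h1 (by positivity)
  rw [integral_const_mul] at step1
  refine le_trans step1 (mul_le_mul_of_nonneg_left ?_ (Real.rpow_nonneg hA.le _))
  refine setIntegral_mono_set (hIb (a+b)) ?_ (HasSubset.Subset.eventuallyLE (Ioi_subset_Ioi hA.le))
  filter_upwards [ae_restrict_mem measurableSet_Ioi] with t ht
  exact mul_nonneg (Real.rpow_nonneg (le_of_lt (mem_Ioi.mp ht)) _) (abs_nonneg _)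

noncomputable irreducible_def cutoff (lam : ℕ → ℝ) (hNex : ∀ Λ : ℝ, ∃ n, Λ < lam n)
    (Λ : ℝ) : ℕ := Nat.find (hNex Λ)

lemma cutoff_spec (lam : ℕ → ℝ) (hNex : ∀ Λ : ℝ, ∃ n, Λ < lam n) (Λ : ℝ) :
    Λ < lam (cutoff lam hNex Λ) := by
  rw [cutoff_def]
  exact Nat.find_spec (hNex Λ)

lemma cutoff_min (lam : ℕ → ℝ) (hNex : ∀ Λ : ℝ, ∃ n, Λ < lam n) (Λ : ℝ)
    {n : ℕ} (hn : n < cutoff lam hNex Λ) : lam n ≤ Λ := by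
  rw [cutoff_def] at hn
  exact le_of_not_gt (Nat.find_min (hNex Λ) hn)

noncomputable def th (lam : ℕ → ℝ) (u : ℝ) : ℝ := ∑' n, Real.exp (-(u * lam n))

lemma th_nonneg (lam : ℕ → ℝ) (u : ℝ) : 0 ≤ th lam u :=
  tsum_nonneg fun _ => (Real.exp_pos _).le

lemma th_anti (lam : ℕ → ℝ) (hlam_pos : ∀ n, 0 < lam n)
    (hsum : ∀ t : ℝ, 0 < t → Summable fun n => Real.exp (-(t * lam n)))
    {u v : ℝ} (hu : 0 < u) (huv : u ≤ v) : th lam v ≤ th lam u := by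
  refine Summable.tsum_le_tsum (fun n => ?_) (hsum v (lt_of_lt_of_le hu huv)) (hsum u hu)
  exact Real.exp_le_exp.2 (neg_le_neg
    (mul_le_mul_of_nonneg_right huv (hlam_pos n).le))

lemma th_mul_integrable (lam : ℕ → ℝ) (hlam_pos : ∀ n, 0 < lam n)
    (hsum : ∀ t : ℝ, 0 < t → Summable fun n => Real.exp (-(t * lam n)))
    {f : ℝ → ℝ} (hfm : AEStronglyMeasurable f (volume : Measure ℝ))
    (hf_supp : ∀ t : ℝ, t < 1 → f t = 0)
    (habs : IntegrableOn f (Ioi (0:ℝ)) volume)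
    {e : ℝ} (he : 0 < e) :
    IntegrableOn (fun t => th lam (e * t) * f t) (Ioi (0:ℝ)) volume := by
  have hkey : (fun t : ℝ => th lam (e * t) * f t)
      = fun t => th lam (e * max t 1) * f t := by
    funext t
    rcases lt_or_ge t 1 with h | h
    · rw [hf_supp t h, mul_zero, mul_zero]
    · rw [max_eq_left h]
  rw [hkey]
  have hanti : Antitone (fun t : ℝ => th lam (e * max t 1)) := by
    intro t t' htt'
    exact th_anti lam hlam_pos hsum (by positivity)
      (mul_le_mul_of_nonneg_left (max_le_max htt' le_rfl) he.le)
  refine Integrable.mono' (habs.norm.const_mul (th lam e))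
    ((hanti.measurable.aestronglyMeasurable.mul hfm).restrict) ?_
  filter_upwards [ae_restrict_mem measurableSet_Ioi] with t _
  rw [norm_mul]
  have h1 : ‖th lam (e * max t 1)‖ ≤ th lam e := by
    rw [Real.norm_of_nonneg (th_nonneg _ _)]
    refine th_anti lam hlam_pos hsum he ?_
    nlinarith [le_max_right t 1, he]
  exact mul_le_mul_of_nonneg_right h1 (norm_nonneg _)

lemma exp_mul_integrable {f : ℝ → ℝ} (hfm : AEStronglyMeasurable f (volume : Measure ℝ))
    (habs : IntegrableOn f (Ioi (0:ℝ)) volume)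
    {x : ℝ} (hx : 0 ≤ x) :
    IntegrableOn (fun t => Real.exp (-(x * t)) * f t) (Ioi (0:ℝ)) volume := by
  refine Integrable.mono' habs.norm
    (((Real.continuous_exp.comp
      (continuous_const.mul continuous_id).neg).measurable.aestronglyMeasurable.mul hfm).restrict) ?_
  filter_upwards [ae_restrict_mem measurableSet_Ioi] with t ht
  rw [norm_mul]
  have h1 : ‖Real.exp (-(x * t))‖ ≤ 1 := by
    rw [Real.norm_of_nonneg (Real.exp_pos _).le, Real.exp_le_one_iff]
    have := mem_Ioi.mp ht
    nlinarith
  calc ‖Real.exp (-(x*t))‖ * ‖f t‖ ≤ 1 * ‖f t‖ :=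
        mul_le_mul_of_nonneg_right h1 (norm_nonneg _)
    _ = ‖f t‖ := one_mul _

set_option maxHeartbeats 4000000 in
theorem main_theorem_residue_as_limit
    (k : ℕ) (s : Fin (k + 2) → ℝ) (hs : ∀ i j : Fin (k + 2), i < j → s j < s i)
    (c : Fin (k + 1) → ℝ)
    (lam : ℕ → ℝ) (hlam_mono : Monotone lam) (hlam_pos : ∀ n, 0 < lam n)
    (hlam_top : Tendsto lam atTop atTop)
    (hsum : ∀ t : ℝ, 0 < t → Summable fun n => Real.exp (-(t * lam n)))
    (htrace : (fun t : ℝ =>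
        (∑' n, Real.exp (-(t * lam n))) -
          ∑ i : Fin (k + 1), c i * t ^ (-(s i.castSucc)))
        =O[𝓝[>] (0 : ℝ)] fun t : ℝ => t ^ (-(s (Fin.last (k + 1)))))
    (f : ℝ → ℝ)
    (hf_pc : PiecewiseContinuous f)
    (hf_supp : ∀ t : ℝ, t < 1 → f t = 0)
    (hf_decay : ∀ m : ℝ, f =O[atTop] fun t : ℝ => t ^ (-m))
    (hmoments : ∀ i : Fin (k + 1),
        ∫ t in Set.Ioi (0 : ℝ), t ^ (-(s i.castSucc)) * f t =
          if i = Fin.last k then 1 else 0)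
    (F : ℝ → ℝ)
    (hF : ∀ x : ℝ, F x = ∫ t in Set.Ioi (0 : ℝ), Real.exp (-(x * t)) * f t)
    (m : ℝ) (hm : s 0 - s (Fin.last k).castSucc < m) :
    Tendsto
      (fun Λ : ℝ =>
        (m * Real.log Λ / Λ) ^ (s (Fin.last k).castSucc) *
          ∑' n, if lam n ≤ Λ then F (lam n * (m * Real.log Λ / Λ)) else 0)
      atTop (𝓝 (c (Fin.last k))) := by
  classical
  set sk := s (Fin.last k).castSucc with hskdef
  set sK := s (Fin.last (k+1)) with hsKdef
  set ck := c (Fin.last k) with hckdef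
  -- basic order facts
  have hsi_le_s0 : ∀ i : Fin (k+1), s i.castSucc ≤ s 0 := by
    intro i
    rcases eq_or_ne i.castSucc 0 with h | h
    · rw [h]
    · exact (hs 0 i.castSucc (Fin.pos_of_ne_zero h)).le
  have hsk_le_s0 : sk ≤ s 0 := hsi_le_s0 (Fin.last k)
  have hsK_lt_sk : sK < sk := hs _ _ (Fin.castSucc_lt_last (Fin.last k))
  have hsK_le_s0 : sK ≤ s 0 := by
    refine le_of_lt (hs 0 (Fin.last (k+1)) ?_)
    rw [Fin.lt_def]
    simp
  have hm0 : 0 < m := lt_of_le_of_lt (by linarith) hm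
  -- epsilon
  let epsf : ℝ → ℝ := fun Λ => m * Real.log Λ / Λ
  have heps0 : Tendsto epsf atTop (𝓝 0) := by
    have h := Real.isLittleO_log_id_atTop.tendsto_div_nhds_zero
    have h2 := h.const_mul m
    simp only [mul_zero] at h2
    refine h2.congr fun Λ => ?_
    simp [epsf, mul_div_assoc]
  have hepspos : ∀ Λ : ℝ, 1 < Λ → 0 < epsf Λ := by
    intro Λ hΛ
    have h1 : 0 < Real.log Λ := Real.log_pos hΛ
    have h2 : (0:ℝ) < Λ := lt_trans one_pos hΛ
    exact div_pos (mul_pos hm0 h1) h2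
  -- the cutoff index
  have hNex : ∀ Λ : ℝ, ∃ n, Λ < lam n := fun Λ => (hlam_top.eventually_gt_atTop Λ).exists
  let Nf : ℝ → ℕ := cutoff lam hNex
  have hNspec : ∀ Λ, Λ < lam (Nf Λ) := fun Λ => cutoff_spec lam hNex Λ
  have hNiff : ∀ Λ n, lam n ≤ Λ ↔ n < Nf Λ := by
    intro Λ n
    constructor
    · intro h
      by_contra hc
      push_neg at hc
      exact absurd h (not_le.2 (lt_of_lt_of_le (hNspec Λ) (hlam_mono hc)))
    · intro h
      exact cutoff_min lam hNex Λ h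
  -- f integrability
  have hfm := pc_aesm hf_pc
  have hbase : IntegrableOn (fun t => t ^ (-sk) * f t) (Ioi (0:ℝ)) volume := by
    by_contra hcon
    have h := hmoments (Fin.last k)
    rw [if_pos rfl] at h
    rw [← hskdef] at h
    rw [integral_undef hcon] at h
    norm_num at h
  have hw := weight_integrable hfm hf_supp hf_decay hbase
  have hwabs : ∀ b : ℝ, IntegrableOn (fun t => t ^ b * |f t|) (Ioi (0:ℝ)) volume := by
    intro b
    refine ((hw b).norm.congr ?_)
    filter_upwards [ae_restrict_mem measurableSet_Ioi] with t ht
    rw [norm_mul, Real.norm_of_nonneg (Real.rpow_nonneg (le_of_lt (mem_Ioi.mp ht)) _),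
      Real.norm_eq_abs]
  have hfi : IntegrableOn f (Ioi (0:ℝ)) volume := by
    have h := hw 0
    simpa [Real.rpow_zero] using h
  have habs : IntegrableOn (fun t => |f t|) (Ioi (0:ℝ)) volume := hfi.abs
  let I : ℝ → ℝ := fun b => ∫ t in Ioi (0:ℝ), t ^ b * |f t|
  have hI_nonneg : ∀ b, 0 ≤ I b := fun b =>
    setIntegral_nonneg measurableSet_Ioi fun t ht =>
      mul_nonneg (Real.rpow_nonneg (le_of_lt (mem_Ioi.mp ht)) _) (abs_nonneg _)
  let I₀ : ℝ := ∫ t in Ioi (0:ℝ), |f t|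
  have hI₀_nonneg : 0 ≤ I₀ :=
    setIntegral_nonneg measurableSet_Ioi fun t _ => abs_nonneg _
  -- remainder function and trace expansion bound
  let Rf : ℝ → ℝ := fun u => th lam u - ∑ i : Fin (k+1), c i * u ^ (-(s i.castSucc))
  rw [isBigO_iff] at htrace
  obtain ⟨C₀, hC₀⟩ := htrace
  rw [eventually_nhdsWithin_iff, Metric.eventually_nhds_iff] at hC₀
  obtain ⟨δ₀, hδ₀pos, hR⟩ := hC₀
  have hRbound : ∀ u : ℝ, 0 < u → u < δ₀ → |Rf u| ≤ C₀ * u ^ (-sK) := by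
    intro u hu hud
    have h := hR (y := u) (by rw [Real.dist_eq, sub_zero, abs_of_pos hu]; exact hud)
      (mem_Ioi.2 hu)
    rw [Real.norm_eq_abs, Real.norm_eq_abs, abs_of_nonneg (Real.rpow_nonneg hu.le _)] at h
    exact h
  have hC₀nn : 0 ≤ C₀ := by
    have h := hRbound (δ₀/2) (by positivity) (by linarith)
    nlinarith [abs_nonneg (Rf (δ₀/2)),
      Real.rpow_pos_of_pos (show (0:ℝ) < δ₀/2 by positivity) (-sK)]
  -- small-u polynomial bound on th
  set δ₁ : ℝ := min (δ₀/2) 1 with hδ₁def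
  have hδ₁pos : 0 < δ₁ := lt_min (by positivity) one_pos
  have hδ₁le1 : δ₁ ≤ 1 := min_le_right _ _
  have hδ₁lt : δ₁ < δ₀ := lt_of_le_of_lt (min_le_left _ _) (by linarith)
  set K : ℝ := (∑ i : Fin (k+1), |c i|) + C₀ with hKdef
  have hKnn : 0 ≤ K := by
    have : (0:ℝ) ≤ ∑ i : Fin (k+1), |c i| :=
      Finset.sum_nonneg fun i _ => abs_nonneg _
    linarith
  have hθK : ∀ u : ℝ, 0 < u → u ≤ δ₁ → th lam u ≤ K * u ^ (-(s 0)) := by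
    intro u hu hud
    have hu1 : u ≤ 1 := le_trans hud hδ₁le1
    have h1 : th lam u = Rf u + ∑ i : Fin (k+1), c i * u ^ (-(s i.castSucc)) := by
      simp [Rf]
    have h2 : |Rf u| ≤ C₀ * u ^ (-sK) := hRbound u hu (lt_of_le_of_lt hud hδ₁lt)
    have h3 : ∀ i : Fin (k+1), u ^ (-(s i.castSucc)) ≤ u ^ (-(s 0)) := fun i =>
      Real.rpow_le_rpow_of_exponent_ge hu hu1 (neg_le_neg (hsi_le_s0 i))
    have h4 : u ^ (-sK) ≤ u ^ (-(s 0)) :=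
      Real.rpow_le_rpow_of_exponent_ge hu hu1 (neg_le_neg hsK_le_s0)
    calc th lam u ≤ |Rf u| + ∑ i : Fin (k+1), |c i| * u ^ (-(s i.castSucc)) := by
          rw [h1]
          exact add_le_add (le_abs_self _)
            (Finset.sum_le_sum fun i _ =>
              mul_le_mul_of_nonneg_right (le_abs_self _) (Real.rpow_nonneg hu.le _))
      _ ≤ C₀ * u ^ (-(s 0)) + ∑ i : Fin (k+1), |c i| * u ^ (-(s 0)) :=
          add_le_add (le_trans h2 (mul_le_mul_of_nonneg_left h4 hC₀nn))
            (Finset.sum_le_sum fun i _ =>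
              mul_le_mul_of_nonneg_left (h3 i) (abs_nonneg _))
      _ = K * u ^ (-(s 0)) := by
          rw [← Finset.sum_mul, hKdef]
          ring
  -- key decomposition
  have key : ∀ Λ : ℝ, 1 < Λ →
      epsf Λ ^ sk * (∑' n, if lam n ≤ Λ then F (lam n * epsf Λ) else 0)
      = ck + (epsf Λ ^ sk * (∫ t in Ioi (0:ℝ), Rf (epsf Λ * t) * f t)
            - epsf Λ ^ sk * (∫ t in Ioi (0:ℝ),
                th (fun n => lam (n + Nf Λ)) (epsf Λ * t) * f t)) := by
    intro Λ hΛ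
    set e := epsf Λ with hedef
    set N := Nf Λ with hNdef
    have he : 0 < e := hepspos Λ hΛ
    have hlam'pos : ∀ n, 0 < lam (n + N) := fun n => hlam_pos _
    have hsum' : ∀ t : ℝ, 0 < t → Summable fun n => Real.exp (-(t * lam (n + N))) :=
      fun t ht => (summable_nat_add_iff N).2 (hsum t ht)
    have hθf : IntegrableOn (fun t => th lam (e*t) * f t) (Ioi (0:ℝ)) volume :=
      th_mul_integrable lam hlam_pos hsum hfm hf_supp hfi he
    have htailf : IntegrableOn (fun t => th (fun n => lam (n+N)) (e*t) * f t)
        (Ioi (0:ℝ)) volume :=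
      th_mul_integrable _ hlam'pos hsum' hfm hf_supp hfi he
    have hpowf : ∀ i : Fin (k+1),
        IntegrableOn (fun t => c i * (e*t) ^ (-(s i.castSucc)) * f t) (Ioi (0:ℝ)) volume := by
      intro i
      refine (((hw (-(s i.castSucc))).const_mul (c i * e ^ (-(s i.castSucc)))).congr ?_)
      filter_upwards [ae_restrict_mem measurableSet_Ioi] with t ht
      rw [Real.mul_rpow he.le (le_of_lt (mem_Ioi.mp ht))]
      ring
    have hsum_int : IntegrableOn
        (fun t => ∑ i : Fin (k+1), c i * (e*t) ^ (-(s i.castSucc)) * f t)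
        (Ioi (0:ℝ)) volume :=
      integrable_finset_sum _ (fun i _ => hpowf i)
    have hRff : IntegrableOn (fun t => Rf (e*t) * f t) (Ioi (0:ℝ)) volume := by
      refine (hθf.sub hsum_int).congr (Eventually.of_forall fun t => ?_)
      simp only [Pi.sub_apply, Rf]
      rw [sub_mul, Finset.sum_mul]
    have h0 : ∀ n ∉ Finset.range N, (if lam n ≤ Λ then F (lam n * e) else 0) = 0 := by
      intro n hn
      exact if_neg fun h => hn (Finset.mem_range.2 ((hNiff Λ n).1 h))
    have step1 : (∑' n, if lam n ≤ Λ then F (lam n * e) else 0)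
        = ∑ n ∈ Finset.range N, F (lam n * e) := by
      rw [tsum_eq_sum h0]
      exact Finset.sum_congr rfl fun n hn => if_pos ((hNiff Λ n).2 (Finset.mem_range.1 hn))
    have step2 : ∀ n : ℕ, F (lam n * e)
        = ∫ t in Ioi (0:ℝ), Real.exp (-(e * t * lam n)) * f t := by
      intro n
      rw [hF]
      refine setIntegral_congr_fun measurableSet_Ioi fun t _ => ?_
      rw [show lam n * e * t = e * t * lam n by ring]
    have hexpint : ∀ n : ℕ,
        IntegrableOn (fun t => Real.exp (-(e * t * lam n)) * f t) (Ioi (0:ℝ)) volume := by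
      intro n
      have h := exp_mul_integrable hfm hfi (x := e * lam n)
        (mul_nonneg he.le (hlam_pos n).le)
      refine h.congr (Eventually.of_forall fun t => ?_)
      have harg : e * lam n * t = e * t * lam n := by ring
      simp only [harg]
    have step3 : ∑ n ∈ Finset.range N, ∫ t in Ioi (0:ℝ), Real.exp (-(e*t*lam n)) * f t
        = ∫ t in Ioi (0:ℝ), (∑ n ∈ Finset.range N, Real.exp (-(e*t*lam n))) * f t := by
      rw [← integral_finset_sum _ (fun n _ => hexpint n)]
      refine setIntegral_congr_fun measurableSet_Ioi fun t _ => ?_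
      rw [Finset.sum_mul]
    have step4 : ∫ t in Ioi (0:ℝ), (∑ n ∈ Finset.range N, Real.exp (-(e*t*lam n))) * f t
        = ∫ t in Ioi (0:ℝ), (th lam (e*t) - th (fun n => lam (n+N)) (e*t)) * f t := by
      refine setIntegral_congr_fun measurableSet_Ioi fun t ht => ?_
      have htpos : (0:ℝ) < t := mem_Ioi.mp ht
      have h := Summable.sum_add_tsum_nat_add (f := fun n => Real.exp (-(e * t * lam n))) N
        (hsum (e*t) (by positivity))
      have h2 : (∑ n ∈ Finset.range N, Real.exp (-(e*t*lam n)))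
          = th lam (e*t) - th (fun n => lam (n+N)) (e*t) := by
        have hA : th lam (e*t) = ∑' n, Real.exp (-(e*t*lam n)) := rfl
        have hB : th (fun n => lam (n+N)) (e*t) = ∑' n, Real.exp (-(e*t*lam (n+N))) := rfl
        rw [hA, hB]
        linarith [h]
      rw [h2]
    have step5 : ∫ t in Ioi (0:ℝ), (th lam (e*t) - th (fun n => lam (n+N)) (e*t)) * f t
        = (∫ t in Ioi (0:ℝ), th lam (e*t) * f t)
          - ∫ t in Ioi (0:ℝ), th (fun n => lam (n+N)) (e*t) * f t := by
      rw [← integral_sub hθf htailf]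
      refine setIntegral_congr_fun measurableSet_Ioi fun t _ => ?_
      ring
    have step6 : (∫ t in Ioi (0:ℝ), th lam (e*t) * f t)
        = (∫ t in Ioi (0:ℝ), Rf (e*t) * f t) + ck * e ^ (-sk) := by
      have hdec : ∫ t in Ioi (0:ℝ), th lam (e*t) * f t
          = (∫ t in Ioi (0:ℝ), Rf (e*t) * f t)
            + ∫ t in Ioi (0:ℝ), (∑ i : Fin (k+1), c i * (e*t) ^ (-(s i.castSucc)) * f t) := by
        rw [← integral_add hRff hsum_int]
        refine setIntegral_congr_fun measurableSet_Ioi fun t _ => ?_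
        simp only [Rf]
        rw [sub_mul, ← Finset.sum_mul]
        ring
      have hmom : ∫ t in Ioi (0:ℝ),
          (∑ i : Fin (k+1), c i * (e*t) ^ (-(s i.castSucc)) * f t) = ck * e ^ (-sk) := by
        rw [integral_finset_sum _ (fun i _ => hpowf i)]
        have hterm : ∀ i : Fin (k+1), ∫ t in Ioi (0:ℝ), c i * (e*t) ^ (-(s i.castSucc)) * f t
            = c i * e ^ (-(s i.castSucc)) * (if i = Fin.last k then (1:ℝ) else 0) := by
          intro i
          have heq : ∫ t in Ioi (0:ℝ), c i * (e*t) ^ (-(s i.castSucc)) * f t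
              = c i * e ^ (-(s i.castSucc)) * ∫ t in Ioi (0:ℝ), t ^ (-(s i.castSucc)) * f t := by
            rw [← integral_const_mul]
            refine setIntegral_congr_fun measurableSet_Ioi fun t ht => ?_
            rw [Real.mul_rpow he.le (le_of_lt (mem_Ioi.mp ht))]
            ring
          rw [heq, hmoments i]
        rw [Finset.sum_congr rfl (fun i _ => hterm i)]
        have hite : ∀ i : Fin (k+1), c i * e ^ (-(s i.castSucc)) * (if i = Fin.last k then (1:ℝ) else 0)
            = if i = Fin.last k then c i * e ^ (-(s i.castSucc)) else 0 := by
          intro i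
          by_cases h : i = Fin.last k
          · rw [if_pos h, if_pos h, mul_one]
          · rw [if_neg h, if_neg h, mul_zero]
        rw [Finset.sum_congr rfl (fun i _ => hite i),
          Finset.sum_ite_eq' Finset.univ (Fin.last k)]
        rw [if_pos (Finset.mem_univ _)]
      rw [hdec, hmom]
    rw [step1, Finset.sum_congr rfl (fun n _ => step2 n), step3, step4, step5, step6]
    have h1 : e ^ sk * e ^ (-sk) = 1 := by
      rw [← Real.rpow_add he]
      simp
    linear_combination ck * h1
  have hconv : ∀ p : ℝ, 0 < p → Tendsto (fun Λ => epsf Λ ^ p) atTop (𝓝 0) := by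
    intro p hp
    have hc : ContinuousAt (fun x : ℝ => x ^ p) 0 :=
      Real.continuousAt_rpow_const 0 p (Or.inr hp.le)
    have h := hc.tendsto.comp heps0
    rwa [Real.zero_rpow hp.ne'] at h
  have hE1 : Tendsto (fun Λ => epsf Λ ^ sk * (∫ t in Ioi (0:ℝ), Rf (epsf Λ * t) * f t))
      atTop (𝓝 0) := by
    have habs_m : AEStronglyMeasurable (fun t => |f t|) (volume : Measure ℝ) := hfm.norm
    have hfabs_supp : ∀ t : ℝ, t < 1 → |f t| = 0 := fun t ht => by
      rw [hf_supp t ht, abs_zero]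
    set a0 : ℝ := |sk| + 1 with ha0def
    have ha0 : 0 < a0 := by positivity
    have ha0' : 0 < sk + a0 := by
      have := neg_abs_le sk
      rw [ha0def]
      linarith
    set ai : Fin (k+1) → ℝ := fun i => |s i.castSucc| + |sk| + 1 with haidef
    have hai : ∀ i, 0 < ai i := fun i => by rw [haidef]; positivity
    have hai' : ∀ i, 0 < sk - s i.castSucc + ai i := fun i => by
      have h1 := neg_abs_le sk
      have h2 := le_abs_self (s i.castSucc)
      rw [haidef]
      simp only []
      linarith
    have hp1 : 0 < sk - sK := by linarith
    have hRabs : ∀ u : ℝ, 0 < u →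
        |Rf u| ≤ th lam u + ∑ i : Fin (k+1), |c i| * u ^ (-(s i.castSucc)) := by
      intro u hu
      have h2 : |∑ i : Fin (k+1), c i * u ^ (-(s i.castSucc))|
          ≤ ∑ i : Fin (k+1), |c i| * u ^ (-(s i.castSucc)) := by
        refine le_trans (Finset.abs_sum_le_sum_abs _ _) (le_of_eq ?_)
        refine Finset.sum_congr rfl fun i _ => ?_
        rw [abs_mul, abs_of_nonneg (Real.rpow_nonneg hu.le _)]
      calc |Rf u| = |th lam u + -(∑ i : Fin (k+1), c i * u ^ (-(s i.castSucc)))| := by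
            simp only [Rf]
            ring_nf
        _ ≤ |th lam u| + |-(∑ i : Fin (k+1), c i * u ^ (-(s i.castSucc)))| := abs_add_le _ _
        _ = |th lam u| + |∑ i : Fin (k+1), c i * u ^ (-(s i.castSucc))| := by rw [abs_neg]
        _ ≤ th lam u + ∑ i : Fin (k+1), |c i| * u ^ (-(s i.castSucc)) :=
            add_le_add (le_of_eq (abs_of_nonneg (th_nonneg _ _))) h2
    have hbound : ∀ᶠ Λ : ℝ in atTop,
        |epsf Λ ^ sk * (∫ t in Ioi (0:ℝ), Rf (epsf Λ * t) * f t)|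
        ≤ C₀ * I (-sK) * epsf Λ ^ (sk - sK)
          + th lam δ₁ * δ₁ ^ (-a0) * I a0 * epsf Λ ^ (sk + a0)
          + ∑ i : Fin (k+1), |c i| * δ₁ ^ (-(ai i)) * I (ai i - s i.castSucc)
              * epsf Λ ^ (sk - s i.castSucc + ai i) := by
      filter_upwards [eventually_gt_atTop (1:ℝ)] with Λ hΛ
      set e := epsf Λ with hedef
      have he : 0 < e := hepspos Λ hΛ
      set B : ℝ := δ₁ / e with hBdef
      have hB : 0 < B := div_pos hδ₁pos he
      have heB : e * B = δ₁ := by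
        rw [hBdef]
        field_simp
      have hBpow : ∀ a : ℝ, B ^ (-a) = δ₁ ^ (-a) * e ^ a := by
        intro a
        rw [hBdef, div_eq_mul_inv, Real.mul_rpow hδ₁pos.le (inv_nonneg.2 he.le),
          Real.inv_rpow he.le]
        congr 1
        rw [Real.rpow_neg he.le, inv_inv]
      have hemul : ∀ x y : ℝ, e ^ x * e ^ y = e ^ (x+y) := fun x y =>
        (Real.rpow_add he x y).symm
      -- integrability of the remainder integrand
      have hθf : IntegrableOn (fun t => th lam (e*t) * f t) (Ioi (0:ℝ)) volume :=
        th_mul_integrable lam hlam_pos hsum hfm hf_supp hfi he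
      have hθabsf : IntegrableOn (fun t => th lam (e*t) * |f t|) (Ioi (0:ℝ)) volume :=
        th_mul_integrable lam hlam_pos hsum habs_m hfabs_supp habs he
      have hpowf : ∀ i : Fin (k+1),
          IntegrableOn (fun t => c i * (e*t) ^ (-(s i.castSucc)) * f t) (Ioi (0:ℝ)) volume := by
        intro i
        refine (((hw (-(s i.castSucc))).const_mul (c i * e ^ (-(s i.castSucc)))).congr ?_)
        filter_upwards [ae_restrict_mem measurableSet_Ioi] with t ht
        rw [Real.mul_rpow he.le (le_of_lt (mem_Ioi.mp ht))]
        ring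
      have hsum_int : IntegrableOn
          (fun t => ∑ i : Fin (k+1), c i * (e*t) ^ (-(s i.castSucc)) * f t)
          (Ioi (0:ℝ)) volume :=
        integrable_finset_sum _ (fun i _ => hpowf i)
      have hRff : IntegrableOn (fun t => Rf (e*t) * f t) (Ioi (0:ℝ)) volume := by
        refine (hθf.sub hsum_int).congr (Eventually.of_forall fun t => ?_)
        simp only [Pi.sub_apply, Rf]
        rw [sub_mul, Finset.sum_mul]
      have hRfabs : IntegrableOn (fun t => |Rf (e*t) * f t|) (Ioi (0:ℝ)) volume := hRff.abs
      -- split the integral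
      have hsplit : ∫ t in Ioi (0:ℝ), |Rf (e*t) * f t|
          = (∫ t in Ioc (0:ℝ) B, |Rf (e*t) * f t|) + ∫ t in Ioi B, |Rf (e*t) * f t| := by
        rw [← setIntegral_union (Set.Ioc_disjoint_Ioi le_rfl) measurableSet_Ioi
          (hRfabs.mono_set Ioc_subset_Ioi_self)
          (hRfabs.mono_set (Ioi_subset_Ioi hB.le)), Ioc_union_Ioi_eq_Ioi hB.le]
      -- piece 1
      have hP1 : (∫ t in Ioc (0:ℝ) B, |Rf (e*t) * f t|) ≤ C₀ * e ^ (-sK) * I (-sK) := by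
        have hle : (∫ t in Ioc (0:ℝ) B, |Rf (e*t) * f t|)
            ≤ ∫ t in Ioc (0:ℝ) B, (C₀ * e ^ (-sK)) * (t ^ (-sK) * |f t|) := by
          refine setIntegral_mono_on (hRfabs.mono_set Ioc_subset_Ioi_self)
            (((hwabs (-sK)).mono_set Ioc_subset_Ioi_self).const_mul _)
            measurableSet_Ioc ?_
          intro t ht
          have htpos : (0:ℝ) < t := ht.1
          have hlt : e * t < δ₀ := by
            have h1 : e * t ≤ e * B := mul_le_mul_of_nonneg_left ht.2 he.le
            rw [heB] at h1
            linarith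
          calc |Rf (e*t) * f t| = |Rf (e*t)| * |f t| := abs_mul _ _
            _ ≤ (C₀ * (e*t) ^ (-sK)) * |f t| :=
                mul_le_mul_of_nonneg_right (hRbound _ (by positivity) hlt) (abs_nonneg _)
            _ = (C₀ * e ^ (-sK)) * (t ^ (-sK) * |f t|) := by
                rw [Real.mul_rpow he.le htpos.le]
                ring
        refine le_trans hle ?_
        rw [integral_const_mul]
        refine mul_le_mul_of_nonneg_left ?_ (by positivity)
        refine setIntegral_mono_set (hwabs (-sK)) ?_
          (HasSubset.Subset.eventuallyLE Ioc_subset_Ioi_self)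
        filter_upwards [ae_restrict_mem measurableSet_Ioi] with t ht
        exact mul_nonneg (Real.rpow_nonneg (le_of_lt (mem_Ioi.mp ht)) _) (abs_nonneg _)
      -- piece 2
      have hIoiB : Ioi B ⊆ Ioi (0:ℝ) := Ioi_subset_Ioi hB.le
      have hg2a : IntegrableOn (fun t => th lam (e*t) * |f t|) (Ioi B) volume :=
        hθabsf.mono_set hIoiB
      have hg2b : ∀ i : Fin (k+1), IntegrableOn
          (fun t => (|c i| * e ^ (-(s i.castSucc))) * (t ^ (-(s i.castSucc)) * |f t|))
          (Ioi B) volume := fun i =>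
        ((hwabs (-(s i.castSucc))).mono_set hIoiB).const_mul _
      have hP2 : (∫ t in Ioi B, |Rf (e*t) * f t|)
          ≤ th lam δ₁ * (B ^ (-a0) * I a0)
            + ∑ i : Fin (k+1), (|c i| * e ^ (-(s i.castSucc)))
                * (B ^ (-(ai i)) * I (ai i - s i.castSucc)) := by
        have hstepa : (∫ t in Ioi B, |Rf (e*t) * f t|)
            ≤ ∫ t in Ioi B, (th lam (e*t) * |f t|
              + ∑ i : Fin (k+1), (|c i| * e ^ (-(s i.castSucc)))
                  * (t ^ (-(s i.castSucc)) * |f t|)) := by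
          refine setIntegral_mono_on (hRfabs.mono_set hIoiB)
            (hg2a.add (integrable_finset_sum _ fun i _ => hg2b i)) measurableSet_Ioi ?_
          intro t ht
          have htpos : (0:ℝ) < t := lt_trans hB (mem_Ioi.mp ht)
          have hu : (0:ℝ) < e * t := by positivity
          calc |Rf (e*t) * f t| = |Rf (e*t)| * |f t| := abs_mul _ _
            _ ≤ (th lam (e*t) + ∑ i : Fin (k+1), |c i| * (e*t) ^ (-(s i.castSucc))) * |f t| :=
                mul_le_mul_of_nonneg_right (hRabs _ hu) (abs_nonneg _)
            _ = th lam (e*t) * |f t|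
                + ∑ i : Fin (k+1), (|c i| * e ^ (-(s i.castSucc)))
                    * (t ^ (-(s i.castSucc)) * |f t|) := by
                rw [add_mul, Finset.sum_mul]
                congr 1
                refine Finset.sum_congr rfl fun i _ => ?_
                rw [Real.mul_rpow he.le htpos.le]
                ring
        rw [integral_add hg2a (integrable_finset_sum _ fun i _ => hg2b i),
          integral_finset_sum _ (fun i _ => hg2b i)] at hstepa
        refine le_trans hstepa (add_le_add ?_ ?_)
        · -- theta part
          have h1 : (∫ t in Ioi B, th lam (e*t) * |f t|)
              ≤ ∫ t in Ioi B, th lam δ₁ * |f t| := by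
            refine setIntegral_mono_on hg2a ((habs.mono_set hIoiB).const_mul _)
              measurableSet_Ioi ?_
            intro t ht
            have hge : δ₁ ≤ e * t := by
              rw [← heB]
              exact mul_le_mul_of_nonneg_left (le_of_lt (mem_Ioi.mp ht)) he.le
            exact mul_le_mul_of_nonneg_right
              (th_anti lam hlam_pos hsum hδ₁pos hge) (abs_nonneg _)
          refine le_trans h1 ?_
          rw [integral_const_mul]
          refine mul_le_mul_of_nonneg_left ?_ (th_nonneg _ _)
          have h2 : (∫ t in Ioi B, |f t|) = ∫ t in Ioi B, t ^ (0:ℝ) * |f t| := by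
            refine setIntegral_congr_fun measurableSet_Ioi fun t _ => ?_
            rw [Real.rpow_zero, one_mul]
          rw [h2]
          have h3 := tail_int hwabs (0:ℝ) ha0 hB
          rwa [add_zero] at h3
        · -- power parts
          refine Finset.sum_le_sum fun i _ => ?_
          rw [integral_const_mul]
          refine mul_le_mul_of_nonneg_left ?_
            (mul_nonneg (abs_nonneg _) (Real.rpow_nonneg he.le _))
          have h3 := tail_int hwabs (-(s i.castSucc)) (hai i) hB
          rwa [← sub_eq_add_neg] at h3
      -- assemble
      have hout : |e ^ sk * (∫ t in Ioi (0:ℝ), Rf (e*t) * f t)|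
          ≤ e ^ sk * ((C₀ * e ^ (-sK) * I (-sK))
            + (th lam δ₁ * (B ^ (-a0) * I a0)
              + ∑ i : Fin (k+1), (|c i| * e ^ (-(s i.castSucc)))
                  * (B ^ (-(ai i)) * I (ai i - s i.castSucc)))) := by
        rw [abs_mul, abs_of_nonneg (Real.rpow_nonneg he.le _)]
        refine mul_le_mul_of_nonneg_left ?_ (Real.rpow_nonneg he.le _)
        calc |∫ t in Ioi (0:ℝ), Rf (e*t) * f t|
            ≤ ∫ t in Ioi (0:ℝ), |Rf (e*t) * f t| := by
              rw [← Real.norm_eq_abs]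
              refine le_trans (norm_integral_le_integral_norm _) (le_of_eq ?_)
              refine setIntegral_congr_fun measurableSet_Ioi fun t _ => ?_
              rw [Real.norm_eq_abs]
          _ = (∫ t in Ioc (0:ℝ) B, |Rf (e*t) * f t|) + ∫ t in Ioi B, |Rf (e*t) * f t| :=
              hsplit
          _ ≤ _ := add_le_add hP1 hP2
      refine le_trans hout (le_of_eq ?_)
      have e1 : e ^ sk * (C₀ * e ^ (-sK) * I (-sK)) = C₀ * I (-sK) * e ^ (sk - sK) := by
        calc e ^ sk * (C₀ * e ^ (-sK) * I (-sK))
            = C₀ * I (-sK) * (e ^ sk * e ^ (-sK)) := by ring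
          _ = C₀ * I (-sK) * e ^ (sk - sK) := by
              rw [hemul]
              ring_nf
      have e2 : e ^ sk * (th lam δ₁ * (B ^ (-a0) * I a0))
          = th lam δ₁ * δ₁ ^ (-a0) * I a0 * e ^ (sk + a0) := by
        calc e ^ sk * (th lam δ₁ * (B ^ (-a0) * I a0))
            = th lam δ₁ * (δ₁ ^ (-a0) * I a0 * (e ^ sk * e ^ a0)) := by
              rw [hBpow]
              ring
          _ = th lam δ₁ * δ₁ ^ (-a0) * I a0 * e ^ (sk + a0) := by
              rw [hemul]
              ring
      have e3 : ∀ i : Fin (k+1), e ^ sk * ((|c i| * e ^ (-(s i.castSucc)))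
              * (B ^ (-(ai i)) * I (ai i - s i.castSucc)))
          = |c i| * δ₁ ^ (-(ai i)) * I (ai i - s i.castSucc)
              * e ^ (sk - s i.castSucc + ai i) := by
        intro i
        calc e ^ sk * ((|c i| * e ^ (-(s i.castSucc)))
                * (B ^ (-(ai i)) * I (ai i - s i.castSucc)))
            = |c i| * δ₁ ^ (-(ai i)) * I (ai i - s i.castSucc)
                * (e ^ sk * e ^ (-(s i.castSucc)) * e ^ (ai i)) := by
              rw [hBpow]
              ring
          _ = |c i| * δ₁ ^ (-(ai i)) * I (ai i - s i.castSucc)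
                * e ^ (sk - s i.castSucc + ai i) := by
              rw [hemul, hemul]
              ring_nf
      rw [mul_add, mul_add, Finset.mul_sum, e1, e2,
        Finset.sum_congr rfl (fun i _ => e3 i)]
      ring
    have hrhs : Tendsto (fun Λ : ℝ => C₀ * I (-sK) * epsf Λ ^ (sk - sK)
          + th lam δ₁ * δ₁ ^ (-a0) * I a0 * epsf Λ ^ (sk + a0)
          + ∑ i : Fin (k+1), |c i| * δ₁ ^ (-(ai i)) * I (ai i - s i.castSucc)
              * epsf Λ ^ (sk - s i.castSucc + ai i)) atTop (𝓝 0) := by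
      have t1 : Tendsto (fun Λ : ℝ => C₀ * I (-sK) * epsf Λ ^ (sk - sK)) atTop (𝓝 0) := by
        have h := (hconv _ hp1).const_mul (C₀ * I (-sK))
        rwa [mul_zero] at h
      have t2 : Tendsto (fun Λ : ℝ => th lam δ₁ * δ₁ ^ (-a0) * I a0 * epsf Λ ^ (sk + a0))
          atTop (𝓝 0) := by
        have h := (hconv _ ha0').const_mul (th lam δ₁ * δ₁ ^ (-a0) * I a0)
        rwa [mul_zero] at h
      have t3 : Tendsto (fun Λ : ℝ => ∑ i : Fin (k+1),
          |c i| * δ₁ ^ (-(ai i)) * I (ai i - s i.castSucc)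
            * epsf Λ ^ (sk - s i.castSucc + ai i)) atTop (𝓝 0) := by
        have h : Tendsto (fun Λ : ℝ => ∑ i : Fin (k+1),
            |c i| * δ₁ ^ (-(ai i)) * I (ai i - s i.castSucc)
              * epsf Λ ^ (sk - s i.castSucc + ai i)) atTop
            (𝓝 (∑ _i : Fin (k+1), (0:ℝ))) := by
          refine tendsto_finset_sum _ fun i _ => ?_
          have h2 := (hconv _ (hai' i)).const_mul
            (|c i| * δ₁ ^ (-(ai i)) * I (ai i - s i.castSucc))
          rwa [mul_zero] at h2
        simpa using h
      have h := (t1.add t2).add t3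
      simpa using h
    refine tendsto_zero_iff_abs_tendsto_zero _ |>.mpr ?_
    exact squeeze_zero' (Eventually.of_forall fun Λ => abs_nonneg _) hbound hrhs
  have hE2 : Tendsto (fun Λ => epsf Λ ^ sk * (∫ t in Ioi (0:ℝ),
      th (fun n => lam (n + Nf Λ)) (epsf Λ * t) * f t)) atTop (𝓝 0) := by
    obtain ⟨δ, hδ0, hδ1, hδkey⟩ : ∃ δ : ℝ, 0 < δ ∧ δ < 1 ∧ s 0 - sk < (1-δ)*m := by
      refine ⟨min (1/2) ((m - (s 0 - sk))/(2*m)), ?_, ?_, ?_⟩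
      · have h1 : 0 < m - (s 0 - sk) := by linarith
        have h2 : 0 < (m - (s 0 - sk))/(2*m) := by positivity
        exact lt_min (by norm_num) h2
      · exact lt_of_le_of_lt (min_le_left _ _) (by norm_num)
      · have h2 : min (1/2) ((m - (s 0 - sk))/(2*m)) ≤ (m - (s 0 - sk))/(2*m) :=
          min_le_right _ _
        have h2m : min (1/2) ((m - (s 0 - sk))/(2*m)) * m ≤ ((m - (s 0 - sk))/(2*m)) * m :=
          mul_le_mul_of_nonneg_right h2 hm0.le
        have h3 : ((m - (s 0 - sk))/(2*m)) * m = (m - (s 0 - sk))/2 := by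
          field_simp
        rw [h3] at h2m
        nlinarith
    have hcond : ∀ᶠ Λ : ℝ in atTop, 1 < Λ ∧ δ * epsf Λ ≤ δ₁ ∧ Λ⁻¹ ≤ epsf Λ := by
      have c1 : ∀ᶠ Λ : ℝ in atTop, 1 < Λ := eventually_gt_atTop 1
      have c2 : ∀ᶠ Λ : ℝ in atTop, δ * epsf Λ < δ₁ := by
        have h := heps0.const_mul δ
        rw [mul_zero] at h
        exact h.eventually_lt_const hδ₁pos
      have c3 : ∀ᶠ Λ : ℝ in atTop, Λ⁻¹ ≤ epsf Λ := by
        have hlog : ∀ᶠ Λ : ℝ in atTop, 1/m ≤ Real.log Λ :=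
          Real.tendsto_log_atTop.eventually_ge_atTop _
        filter_upwards [hlog, eventually_gt_atTop (1:ℝ)] with Λ h1 h2
        have hΛpos : (0:ℝ) < Λ := lt_trans one_pos h2
        have hone : 1 ≤ m * Real.log Λ := by
          calc (1:ℝ) = m * (1/m) := by field_simp
            _ ≤ m * Real.log Λ := mul_le_mul_of_nonneg_left h1 hm0.le
        rw [inv_eq_one_div]
        show 1 / Λ ≤ m * Real.log Λ / Λ
        exact (div_le_div_iff_of_pos_right hΛpos).2 hone
      filter_upwards [c1, c2, c3] with Λ h1 h2 h3
      exact ⟨h1, h2.le, h3⟩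
    set q : ℝ := (1-δ)*m - (s 0 - sk) with hqdef
    have hq : 0 < q := by rw [hqdef]; linarith
    have hbound : ∀ᶠ Λ : ℝ in atTop,
        |epsf Λ ^ sk * (∫ t in Ioi (0:ℝ), th (fun n => lam (n + Nf Λ)) (epsf Λ * t) * f t)|
        ≤ (K * δ ^ (-(s 0)) * I₀) * Λ ^ (-q) := by
      filter_upwards [hcond] with Λ hc
      obtain ⟨hΛ, hδε, hinve⟩ := hc
      set e := epsf Λ with hedef
      set N := Nf Λ with hNdef
      have he : 0 < e := hepspos Λ hΛ
      have hΛpos : (0:ℝ) < Λ := lt_trans one_pos hΛ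
      have hsum' : ∀ t : ℝ, 0 < t → Summable (fun n => Real.exp (-(t * lam (n + N)))) :=
        fun t ht => (summable_nat_add_iff N).2 (hsum t ht)
      have hlam'pos : ∀ n, 0 < lam (n + N) := fun n => hlam_pos _
      have htail1 : th (fun n => lam (n+N)) e ≤ Λ ^ (-((1-δ)*m)) * th lam (δ*e) := by
        have hterm : ∀ n, Real.exp (-(e * lam (n+N)))
            ≤ Real.exp (-((1-δ)*e*Λ)) * Real.exp (-(δ*e*lam (n+N))) := by
          intro n
          rw [← Real.exp_add]
          refine Real.exp_le_exp.2 ?_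
          have hlamn : Λ ≤ lam (n+N) :=
            le_of_lt (lt_of_lt_of_le (hNspec Λ) (hlam_mono (Nat.le_add_left N n)))
          nlinarith [mul_nonneg (mul_nonneg (sub_nonneg.2 hδ1.le) he.le)
            (sub_nonneg.2 hlamn)]
        have hsummable1 : Summable (fun n => Real.exp (-(e * lam (n+N)))) := hsum' e he
        have hsummable2 : Summable
            (fun n => Real.exp (-((1-δ)*e*Λ)) * Real.exp (-(δ*e*lam (n+N)))) :=
          (((summable_nat_add_iff N).2 (hsum (δ*e) (by positivity)))).mul_left _
        calc th (fun n => lam (n+N)) e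
            ≤ ∑' n, Real.exp (-((1-δ)*e*Λ)) * Real.exp (-(δ*e*lam (n+N))) :=
              Summable.tsum_le_tsum hterm hsummable1 hsummable2
          _ = Real.exp (-((1-δ)*e*Λ)) * ∑' n, Real.exp (-(δ*e*lam (n+N))) := tsum_mul_left
          _ ≤ Real.exp (-((1-δ)*e*Λ)) * th lam (δ*e) := by
              refine mul_le_mul_of_nonneg_left ?_ (Real.exp_pos _).le
              have h := Summable.sum_add_tsum_nat_add (f := fun n => Real.exp (-(δ*e*lam n))) N
                (hsum (δ*e) (by positivity))
              have h2 : 0 ≤ ∑ n ∈ Finset.range N, Real.exp (-(δ*e*lam n)) :=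
                Finset.sum_nonneg fun _ _ => (Real.exp_pos _).le
              have hA : th lam (δ*e) = ∑' n, Real.exp (-(δ*e*lam n)) := rfl
              rw [hA]
              linarith
          _ = Λ ^ (-((1-δ)*m)) * th lam (δ*e) := by
              congr 1
              rw [Real.rpow_def_of_pos hΛpos]
              congr 1
              have heΛ : e * Λ = m * Real.log Λ := by
                rw [hedef]
                show m * Real.log Λ / Λ * Λ = m * Real.log Λ
                field_simp
              linear_combination (-(1-δ)) * heΛ
      have hθδe : th lam (δ*e) ≤ K * (δ*e) ^ (-(s 0)) := hθK _ (by positivity) hδε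
      have htailf : IntegrableOn (fun t => th (fun n => lam (n+N)) (e*t) * f t)
          (Ioi (0:ℝ)) volume :=
        th_mul_integrable _ hlam'pos hsum' hfm hf_supp hfi he
      have hint : |∫ t in Ioi (0:ℝ), th (fun n => lam (n+N)) (e*t) * f t|
          ≤ th (fun n => lam (n+N)) e * I₀ := by
        calc |∫ t in Ioi (0:ℝ), th (fun n => lam (n+N)) (e*t) * f t|
            ≤ ∫ t in Ioi (0:ℝ), ‖th (fun n => lam (n+N)) (e*t) * f t‖ := by
              rw [← Real.norm_eq_abs]
              exact norm_integral_le_integral_norm _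
          _ ≤ ∫ t in Ioi (0:ℝ), th (fun n => lam (n+N)) e * |f t| := by
              refine setIntegral_mono_on htailf.norm (habs.const_mul _) measurableSet_Ioi ?_
              intro t ht
              have htpos : (0:ℝ) < t := mem_Ioi.mp ht
              rw [norm_mul, Real.norm_of_nonneg (th_nonneg _ _), Real.norm_eq_abs]
              rcases lt_or_ge t 1 with h | h
              · rw [hf_supp t h, abs_zero, mul_zero, mul_zero]
              · refine mul_le_mul_of_nonneg_right
                  (th_anti _ hlam'pos hsum' he (by nlinarith)) (abs_nonneg _)
          _ = th (fun n => lam (n+N)) e * I₀ := integral_const_mul _ _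
      calc |e ^ sk * (∫ t in Ioi (0:ℝ), th (fun n => lam (n+N)) (e*t) * f t)|
          = e ^ sk * |∫ t in Ioi (0:ℝ), th (fun n => lam (n+N)) (e*t) * f t| := by
            rw [abs_mul, abs_of_nonneg (Real.rpow_nonneg he.le _)]
        _ ≤ e ^ sk * (th (fun n => lam (n+N)) e * I₀) :=
            mul_le_mul_of_nonneg_left hint (Real.rpow_nonneg he.le _)
        _ ≤ e ^ sk * ((Λ ^ (-((1-δ)*m)) * (K * (δ*e) ^ (-(s 0)))) * I₀) := by
            refine mul_le_mul_of_nonneg_left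
              (mul_le_mul_of_nonneg_right ?_ hI₀_nonneg) (Real.rpow_nonneg he.le _)
            exact le_trans htail1
              (mul_le_mul_of_nonneg_left hθδe (Real.rpow_nonneg hΛpos.le _))
        _ ≤ (K * δ ^ (-(s 0)) * I₀) * Λ ^ (-q) := by
            rw [Real.mul_rpow hδ0.le he.le]
            have he1 : e ^ sk * e ^ (-(s 0)) = e ^ (sk - s 0) := by
              rw [← Real.rpow_add he]
              ring_nf
            have he2 : e ^ (sk - s 0) ≤ Λ ^ (s 0 - sk) := by
              have h3 : e ^ (sk - s 0) ≤ (Λ⁻¹) ^ (sk - s 0) :=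
                Real.rpow_le_rpow_of_nonpos (inv_pos.2 hΛpos) hinve (by linarith)
              rwa [Real.inv_rpow hΛpos.le, ← Real.rpow_neg hΛpos.le, neg_sub] at h3
            have he3 : Λ ^ (-((1-δ)*m)) * Λ ^ (s 0 - sk) = Λ ^ (-q) := by
              rw [← Real.rpow_add hΛpos, hqdef]
              ring_nf
            have hKd : 0 ≤ K * δ ^ (-(s 0)) * I₀ :=
              mul_nonneg (mul_nonneg hKnn (Real.rpow_nonneg hδ0.le _)) hI₀_nonneg
            calc e ^ sk * ((Λ ^ (-((1-δ)*m)) * (K * (δ ^ (-(s 0)) * e ^ (-(s 0))))) * I₀)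
                = (K * δ ^ (-(s 0)) * I₀) * (Λ ^ (-((1-δ)*m)) * (e ^ sk * e ^ (-(s 0)))) := by
                  ring
              _ = (K * δ ^ (-(s 0)) * I₀) * (Λ ^ (-((1-δ)*m)) * e ^ (sk - s 0)) := by
                  rw [he1]
              _ ≤ (K * δ ^ (-(s 0)) * I₀) * (Λ ^ (-((1-δ)*m)) * Λ ^ (s 0 - sk)) := by
                  refine mul_le_mul_of_nonneg_left
                    (mul_le_mul_of_nonneg_left he2 (Real.rpow_nonneg hΛpos.le _)) hKd
              _ = (K * δ ^ (-(s 0)) * I₀) * Λ ^ (-q) := by rw [he3]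
    have hrhs : Tendsto (fun Λ : ℝ => (K * δ ^ (-(s 0)) * I₀) * Λ ^ (-q)) atTop (𝓝 0) := by
      have h := (tendsto_rpow_neg_atTop hq).const_mul (K * δ ^ (-(s 0)) * I₀)
      rwa [mul_zero] at h
    refine tendsto_zero_iff_abs_tendsto_zero _ |>.mpr ?_
    exact squeeze_zero' (Eventually.of_forall fun Λ => abs_nonneg _) hbound hrhs
  have hfinal := (tendsto_const_nhds (x := ck) (f := atTop (α := ℝ))).add (hE1.sub hE2)
  rw [sub_zero, add_zero] at hfinal
  refine Tendsto.congr' ?_ hfinal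
  filter_upwards [eventually_gt_atTop (1:ℝ)] with Λ hΛ
  exact (key Λ hΛ).symm
end

section
/- Let (λ_n) be a nondecreasing sequence of positive reals with ∑_n e^{-tλ_n} = c_0 t^{-s_0} + O(t^{-s_1}) as t → 0⁺, where s_0 > s_1. Then with ε(Λ) = log Λ / Λ, one has lim_{Λ→∞} (ε(Λ)^{s_0} / (e Γ(1−s_0,1))) ∑_{0 < λ_n ≤ Λ} e^{-λ_n ε(Λ)} / (1 + λ_n ε(Λ)) = c_0. -/
open MeasureTheory Filter Asymptotics Set Real Topology

/-- The upper incomplete gamma function Γ(a, x) = ∫ₓ^∞ t^(a-1) e^{-t} dt. -/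
noncomputable def upperIncompleteGamma (a x : ℝ) : ℝ :=
  ∫ t in Set.Ioi x, t ^ (a - 1) * Real.exp (-t)


lemma key_integral {b : ℝ} (hb : 0 < b) :
    ∫ u in Ioi (1:ℝ), Real.exp (-(b * u)) = Real.exp (-b) / b := by
  rw [integral_comp_mul_left_Ioi (fun x => Real.exp (-x)) 1 hb, mul_one, integral_exp_neg_Ioi,
    smul_eq_mul, inv_mul_eq_div]

lemma uig_integrable {s₀ : ℝ} (hs₀ : 0 < s₀) :
    IntegrableOn (fun t : ℝ => t ^ (1 - s₀ - 1) * Real.exp (-t)) (Ioi 1) := by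
  have h1 : IntegrableOn (fun u : ℝ => Real.exp (-u)) (Ioi 1) := by
    simpa using exp_neg_integrableOn_Ioi 1 one_pos
  refine Integrable.mono h1 ?_ ?_
  · apply Measurable.aestronglyMeasurable
    fun_prop
  · filter_upwards [ae_restrict_mem (measurableSet_Ioi : MeasurableSet (Ioi (1:ℝ)))] with t ht
    rw [Real.norm_eq_abs, Real.norm_eq_abs, abs_of_nonneg (mul_nonneg (Real.rpow_nonneg (le_trans zero_le_one (le_of_lt ht)) _) (Real.exp_pos _).le),
      abs_of_nonneg (le_of_lt (Real.exp_pos _))]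
    have ht1 : (1:ℝ) ≤ t := le_of_lt ht
    have : t ^ (1 - s₀ - 1) ≤ 1 :=
      Real.rpow_le_one_of_one_le_of_nonpos ht1 (by linarith)
    nlinarith [Real.exp_pos (-t), this]

lemma uig_pos {s₀ : ℝ} (hs₀ : 0 < s₀) : 0 < upperIncompleteGamma (1 - s₀) 1 := by
  rw [upperIncompleteGamma, setIntegral_pos_iff_support_of_nonneg_ae]
  · have hsub : Ioi (1:ℝ) ⊆ Function.support fun t => t ^ (1 - s₀ - 1) * Real.exp (-t) := by
      intro t ht
      have : (0:ℝ) < t ^ (1 - s₀ - 1) * Real.exp (-t) := by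
        have h0 : (0:ℝ) < t := lt_trans one_pos ht
        positivity
      exact ne_of_gt this
    calc (0:ENNReal) < volume (Ioi (1:ℝ)) := by simp [Real.volume_Ioi]
      _ ≤ volume (Function.support (fun t : ℝ => t ^ (1 - s₀ - 1) * Real.exp (-t)) ∩ Ioi 1) := by
          apply measure_mono; intro t ht; exact ⟨hsub ht, ht⟩
  · filter_upwards [ae_restrict_mem (measurableSet_Ioi : MeasurableSet (Ioi (1:ℝ)))] with t ht
    have h0 : (0:ℝ) < t := lt_trans one_pos ht
    positivity
  · exact uig_integrable hs₀


lemma swap_lemma (lam : ℕ → ℝ) (hlam_pos : ∀ n, 0 < lam n)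
    (hsum : ∀ t : ℝ, 0 < t → Summable fun n => Real.exp (-(t * lam n)))
    {e : ℝ} (he : 0 < e) :
    ∑' n, Real.exp (-(lam n * e)) / (1 + lam n * e)
      = Real.exp 1 * ∫ u in Ioi (1:ℝ),
          Real.exp (-u) * ∑' n, Real.exp (-((u * e) * lam n)) := by
  set F : ℕ → ℝ → ℝ := fun n u =>
    (Real.exp 1 * Real.exp (-u)) * Real.exp (-((u * e) * lam n)) with hF
  have hb : ∀ n, 0 < 1 + lam n * e := fun n => by
    have := hlam_pos n; nlinarith
  have hFeq : ∀ n u, F n u = Real.exp 1 * Real.exp (-((1 + lam n * e) * u)) := by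
    intro n u
    rw [hF]
    simp only [← Real.exp_add]
    congr 1
    ring
  have hFint : ∀ n, Integrable (F n) (volume.restrict (Ioi (1:ℝ))) := by
    intro n
    have h1 : IntegrableOn (fun u => Real.exp 1 * Real.exp (-((1 + lam n * e) * u)))
        (Ioi (1:ℝ)) := by
      have h0 := Integrable.const_mul (exp_neg_integrableOn_Ioi 1 (hb n)) (Real.exp 1)
      exact h0.congr (ae_of_all _ fun u => by simp only [neg_mul])
    exact h1.congr_fun (fun u _ => (hFeq n u).symm) measurableSet_Ioi
  have hFval : ∀ n, ∫ u in Ioi (1:ℝ), F n u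
      = Real.exp (-(lam n * e)) / (1 + lam n * e) := by
    intro n
    have : ∫ u in Ioi (1:ℝ), F n u
        = ∫ u in Ioi (1:ℝ), Real.exp 1 * Real.exp (-((1 + lam n * e) * u)) :=
      setIntegral_congr_fun measurableSet_Ioi (fun u _ => hFeq n u)
    rw [this, integral_const_mul, key_integral (hb n), mul_div_assoc', ← Real.exp_add]
    congr 2
    ring
  have hFnonneg : ∀ n u, 0 ≤ F n u := fun n u => by
    rw [hF]; positivity
  have hnorm : ∀ n, ∫ u in Ioi (1:ℝ), ‖F n u‖
      = Real.exp (-(lam n * e)) / (1 + lam n * e) := by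
    intro n
    rw [← hFval n]
    exact setIntegral_congr_fun measurableSet_Ioi
      (fun u _ => Real.norm_of_nonneg (hFnonneg n u))
  have hsummable : Summable fun n => ∫ u in Ioi (1:ℝ), ‖F n u‖ := by
    apply Summable.of_nonneg_of_le (fun n => by
        rw [hnorm n]; exact le_of_lt (div_pos (Real.exp_pos _) (hb n)))
      (fun n => ?_) ((hsum e he).congr (fun n => by rw [mul_comm]))
    rw [hnorm n]
    rw [div_le_iff₀ (hb n)]
    nlinarith [Real.exp_pos (-(lam n * e)), (hlam_pos n), he,
      mul_pos (hlam_pos n) he]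
  have hswap := integral_tsum_of_summable_integral_norm hFint hsummable
  calc ∑' n, Real.exp (-(lam n * e)) / (1 + lam n * e)
      = ∑' n, ∫ u in Ioi (1:ℝ), F n u := by
        exact tsum_congr fun n => (hFval n).symm
    _ = ∫ u in Ioi (1:ℝ), ∑' n, F n u := hswap
    _ = ∫ u in Ioi (1:ℝ),
          (Real.exp 1) * (Real.exp (-u) * ∑' n, Real.exp (-((u * e) * lam n))) := by
        refine setIntegral_congr_fun measurableSet_Ioi (fun u _ => ?_)
        rw [hF]
        rw [tsum_mul_left]
        ring
    _ = Real.exp 1 * ∫ u in Ioi (1:ℝ),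
          Real.exp (-u) * ∑' n, Real.exp (-((u * e) * lam n)) := integral_const_mul _ _


set_option maxHeartbeats 1000000 in
lemma aux_main (lam : ℕ → ℝ) (hlam_pos : ∀ n, 0 < lam n)
    (hsum : ∀ t : ℝ, 0 < t → Summable fun n => Real.exp (-(t * lam n)))
    (c₀ s₀ s₁ : ℝ) (hs : s₁ < s₀) (hs₀ : 0 < s₀)
    (δ C : ℝ) (hδ : 0 < δ) (hδ1 : δ ≤ 1) (hC : 0 < C)
    (hbound : ∀ t, 0 < t → t ≤ δ →
      |(∑' n, Real.exp (-(t * lam n))) - c₀ * t ^ (-s₀)| ≤ C * t ^ (-s₁)) :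
    Tendsto (fun e : ℝ => e ^ s₀ * ∑' n, Real.exp (-(lam n * e)) / (1 + lam n * e))
      (𝓝[>] (0:ℝ)) (𝓝 (Real.exp 1 * (c₀ * upperIncompleteGamma (1 - s₀) 1))) := by
  set θ : ℝ → ℝ := fun t => ∑' n, Real.exp (-(t * lam n)) with hθdef
  have hθnonneg : ∀ t, 0 ≤ θ t := fun t => tsum_nonneg (fun n => (Real.exp_pos _).le)
  have hθanti : ∀ {t t' : ℝ}, 0 < t → t ≤ t' → θ t' ≤ θ t := by
    intro t t' ht htt'
    refine Summable.tsum_le_tsum (fun n => Real.exp_le_exp.2 ?_) (hsum t' (lt_of_lt_of_le ht htt'))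
      (hsum t ht)
    have := (hlam_pos n).le
    nlinarith
  set M : ℝ := |c₀| + C with hM
  have hM0 : 0 < M := by positivity
  have hθle : ∀ t, 0 < t → t ≤ δ → θ t ≤ M * t ^ (-s₀) := by
    intro t ht htδ
    have h1 := hbound t ht htδ
    have h2 : θ t - c₀ * t ^ (-s₀) ≤ C * t ^ (-s₁) := (abs_le.1 h1).2
    have h3 : t ^ (-s₁) ≤ t ^ (-s₀) :=
      Real.rpow_le_rpow_of_exponent_ge ht (le_trans htδ hδ1) (by linarith)
    have h4 : c₀ * t ^ (-s₀) ≤ |c₀| * t ^ (-s₀) :=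
      mul_le_mul_of_nonneg_right (le_abs_self c₀) (Real.rpow_nonneg ht.le _)
    have h5 : C * t ^ (-s₁) ≤ C * t ^ (-s₀) := mul_le_mul_of_nonneg_left h3 hC.le
    rw [hM]; nlinarith
  -- Dominated convergence
  have hDCT : Tendsto (fun e : ℝ => ∫ u in Ioi (1:ℝ), Real.exp (-u) * (e ^ s₀ * θ (u * e)))
      (𝓝[>] (0:ℝ)) (𝓝 (∫ u in Ioi (1:ℝ), Real.exp (-u) * (c₀ * u ^ (-s₀)))) := by
    apply tendsto_integral_filter_of_dominated_convergence
      (bound := fun u : ℝ => Real.exp (-u) * (M + θ δ))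
    · -- measurability
      filter_upwards [self_mem_nhdsWithin] with e he
      have he0 : (0:ℝ) < e := he
      have hg : Antitone (fun u : ℝ => θ (max u 1 * e)) := by
        intro u v huv
        exact hθanti (mul_pos (lt_of_lt_of_le one_pos (le_max_right u 1)) he0)
          (mul_le_mul_of_nonneg_right (max_le_max huv le_rfl) he0.le)
      have hmeas : Measurable fun u : ℝ => Real.exp (-u) * (e ^ s₀ * θ (max u 1 * e)) :=
        ((Real.continuous_exp.comp continuous_neg).measurable).mul
          (hg.measurable.const_mul _)
      refine hmeas.aestronglyMeasurable.congr ?_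
      filter_upwards [ae_restrict_mem measurableSet_Ioi] with u hu
      rw [max_eq_left (le_of_lt hu)]
    · -- bound
      filter_upwards [Ioc_mem_nhdsGT_of_mem (Set.mem_Ico.2 ⟨le_refl (0:ℝ), zero_lt_one⟩)]
        with e he
      obtain ⟨he0, he1⟩ := he
      filter_upwards [ae_restrict_mem measurableSet_Ioi] with u hu
      have hu0 : (0:ℝ) < u := lt_trans one_pos hu
      have hue : 0 < u * e := mul_pos hu0 he0
      rw [Real.norm_of_nonneg (mul_nonneg (Real.exp_pos _).le
        (mul_nonneg (Real.rpow_nonneg he0.le _) (hθnonneg _)))]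
      refine mul_le_mul_of_nonneg_left ?_ (Real.exp_pos _).le
      by_cases hcase : u * e ≤ δ
      · calc e ^ s₀ * θ (u * e) ≤ e ^ s₀ * (M * (u * e) ^ (-s₀)) :=
              mul_le_mul_of_nonneg_left (hθle _ hue hcase) (Real.rpow_nonneg he0.le _)
          _ = M * u ^ (-s₀) * (e ^ s₀ * e ^ (-s₀)) := by
              rw [Real.mul_rpow hu0.le he0.le]; ring
          _ = M * u ^ (-s₀) := by rw [← Real.rpow_add he0]; simp
          _ ≤ M * 1 := mul_le_mul_of_nonneg_left
              (Real.rpow_le_one_of_one_le_of_nonpos hu.le (neg_nonpos.2 hs₀.le)) hM0.le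
          _ ≤ M + θ δ := by rw [mul_one]; linarith [hθnonneg δ]
      · push_neg at hcase
        have h1 : θ (u * e) ≤ θ δ := hθanti hδ hcase.le
        have h2 : e ^ s₀ ≤ 1 := Real.rpow_le_one he0.le he1 hs₀.le
        have := mul_le_mul h2 h1 (hθnonneg _) zero_le_one
        rw [one_mul] at this
        linarith
    · -- bound integrable
      have h1 : IntegrableOn (fun u : ℝ => Real.exp (-u)) (Ioi (1:ℝ)) := by
        have := exp_neg_integrableOn_Ioi (1:ℝ) (zero_lt_one (α := ℝ))
        exact this.congr (ae_of_all _ fun u => by norm_num)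
      exact h1.mul_const _
    · -- pointwise limit
      filter_upwards [ae_restrict_mem measurableSet_Ioi] with u hu
      have hu0 : (0:ℝ) < u := lt_trans one_pos hu
      refine Tendsto.const_mul _ ?_
      rw [← tendsto_sub_nhds_zero_iff]
      have hδu0 : 0 < δ / u := div_pos hδ hu0
      apply squeeze_zero_norm'
        (a := fun e : ℝ => C * u ^ (-s₁) * e ^ (s₀ - s₁))
      · filter_upwards [Ioc_mem_nhdsGT_of_mem (Set.mem_Ico.2 ⟨le_refl (0:ℝ), hδu0⟩)]
          with e he
        obtain ⟨he0, heδu⟩ := he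
        have hue0 : 0 < u * e := mul_pos hu0 he0
        have hueδ : u * e ≤ δ := by
          have := (le_div_iff₀ hu0).mp heδu
          linarith [this]
        have hb := hbound (u * e) hue0 hueδ
        have hkey : e ^ s₀ * θ (u * e) - c₀ * u ^ (-s₀)
            = e ^ s₀ * (θ (u * e) - c₀ * (u * e) ^ (-s₀)) := by
          rw [mul_sub, Real.mul_rpow hu0.le he0.le]
          have h1 : e ^ s₀ * (c₀ * (u ^ (-s₀) * e ^ (-s₀)))
              = c₀ * u ^ (-s₀) * (e ^ s₀ * e ^ (-s₀)) := by ring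
          rw [h1, ← Real.rpow_add he0]
          simp
        have h2 : e ^ s₀ * e ^ (-s₁) = e ^ (s₀ - s₁) := by
          rw [← Real.rpow_add he0]; ring_nf
        calc ‖e ^ s₀ * θ (u * e) - c₀ * u ^ (-s₀)‖
            = e ^ s₀ * |θ (u * e) - c₀ * (u * e) ^ (-s₀)| := by
              rw [hkey, norm_mul, Real.norm_eq_abs, Real.norm_eq_abs,
                abs_of_nonneg (Real.rpow_nonneg he0.le _)]
          _ ≤ e ^ s₀ * (C * (u * e) ^ (-s₁)) :=
              mul_le_mul_of_nonneg_left hb (Real.rpow_nonneg he0.le _)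
          _ = C * u ^ (-s₁) * e ^ (s₀ - s₁) := by
              rw [Real.mul_rpow hu0.le he0.le, ← h2]; ring
      · have h3 : Tendsto (fun e : ℝ => e ^ (s₀ - s₁)) (𝓝 0) (𝓝 ((0:ℝ) ^ (s₀ - s₁))) :=
          (Real.continuousAt_rpow_const 0 _ (Or.inr (by linarith))).tendsto
        rw [Real.zero_rpow (ne_of_gt (by linarith : (0:ℝ) < s₀ - s₁))] at h3
        have h4 := (h3.mono_left (nhdsWithin_le_nhds (s := Ioi (0:ℝ)))).const_mul
          (C * u ^ (-s₁))
        simpa using h4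
  -- identify limit value
  have hval : ∫ u in Ioi (1:ℝ), Real.exp (-u) * (c₀ * u ^ (-s₀))
      = c₀ * upperIncompleteGamma (1 - s₀) 1 := by
    rw [upperIncompleteGamma, ← integral_const_mul]
    refine setIntegral_congr_fun measurableSet_Ioi (fun u hu => ?_)
    rw [show (1:ℝ) - s₀ - 1 = -s₀ by ring]
    ring
  rw [hval] at hDCT
  have hfinal := hDCT.const_mul (Real.exp 1)
  refine Tendsto.congr' ?_ hfinal
  filter_upwards [self_mem_nhdsWithin] with e he
  have he0 : (0:ℝ) < e := he
  rw [← integral_const_mul]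
  have : ∫ u in Ioi (1:ℝ), Real.exp 1 * (Real.exp (-u) * (e ^ s₀ * θ (u * e)))
      = e ^ s₀ * ∫ u in Ioi (1:ℝ), Real.exp 1 * (Real.exp (-u) * θ (u * e)) := by
    rw [← integral_const_mul]
    refine setIntegral_congr_fun measurableSet_Ioi (fun u hu => ?_)
    ring
  rw [this]
  have hswap := swap_lemma lam hlam_pos hsum he0
  rw [← integral_const_mul] at hswap
  rw [← hswap]


lemma extract_bound (lam : ℕ → ℝ) (c₀ s₀ s₁ : ℝ)
    (htrace : (fun t : ℝ => (∑' n, Real.exp (-(t * lam n))) - c₀ * t ^ (-s₀))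
        =O[𝓝[>] (0 : ℝ)] fun t : ℝ => t ^ (-s₁)) :
    ∃ δ C : ℝ, 0 < δ ∧ δ ≤ 1 ∧ 0 < C ∧ ∀ t, 0 < t → t ≤ δ →
      |(∑' n, Real.exp (-(t * lam n))) - c₀ * t ^ (-s₀)| ≤ C * t ^ (-s₁) := by
  obtain ⟨C, hC0, hCb⟩ := htrace.exists_pos
  have h1 := hCb.bound
  rw [eventually_nhdsWithin_iff] at h1
  rw [Metric.eventually_nhds_iff] at h1
  obtain ⟨ε, hε0, hεb⟩ := h1
  refine ⟨min (ε/2) 1, C, lt_min (by linarith) one_pos, min_le_right _ _, hC0, ?_⟩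
  intro t ht htδ
  have hdist : dist t 0 < ε := by
    rw [Real.dist_eq, sub_zero, abs_of_pos ht]
    have := le_trans htδ (min_le_left _ _)
    linarith
  have := hεb hdist ht
  rwa [Real.norm_eq_abs, Real.norm_eq_abs, abs_of_nonneg (Real.rpow_nonneg ht.le _)] at this

lemma s0_pos (lam : ℕ → ℝ) (hlam_pos : ∀ n, 0 < lam n)
    (hsum : ∀ t : ℝ, 0 < t → Summable fun n => Real.exp (-(t * lam n)))
    (c₀ s₀ s₁ : ℝ) (hs : s₁ < s₀)
    (δ C : ℝ) (hδ : 0 < δ) (hδ1 : δ ≤ 1) (hC : 0 < C)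
    (hbound : ∀ t, 0 < t → t ≤ δ →
      |(∑' n, Real.exp (-(t * lam n))) - c₀ * t ^ (-s₀)| ≤ C * t ^ (-s₁)) :
    0 < s₀ := by
  by_contra hcon
  push_neg at hcon
  set M₀ : ℝ := |c₀| + C with hM₀
  have hθub : ∀ t, 0 < t → t ≤ δ → (∑' n, Real.exp (-(t * lam n))) ≤ M₀ := by
    intro t ht htδ
    have h1 := (abs_le.1 (hbound t ht htδ)).2
    have ht1 : t ≤ 1 := le_trans htδ hδ1
    have h2 : t ^ (-s₀) ≤ 1 := Real.rpow_le_one ht.le ht1 (by linarith)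
    have h3 : t ^ (-s₁) ≤ 1 := Real.rpow_le_one ht.le ht1 (by linarith)
    have h4 : c₀ * t ^ (-s₀) ≤ |c₀| := by
      calc c₀ * t ^ (-s₀) ≤ |c₀| * t ^ (-s₀) :=
            mul_le_mul_of_nonneg_right (le_abs_self c₀) (Real.rpow_nonneg ht.le _)
        _ ≤ |c₀| * 1 := mul_le_mul_of_nonneg_left h2 (abs_nonneg _)
        _ = |c₀| := mul_one _
    nlinarith [mul_le_mul_of_nonneg_left h3 hC.le]
  set N : ℕ := ⌈M₀⌉₊ + 1 with hN
  have hNgt : M₀ < (N : ℝ) := by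
    calc M₀ ≤ (⌈M₀⌉₊ : ℝ) := Nat.le_ceil M₀
      _ < (N : ℝ) := by rw [hN]; push_cast; linarith
  have hlim : Tendsto (fun t : ℝ => ∑ i ∈ Finset.range N, Real.exp (-(t * lam i)))
      (𝓝[>] 0) (𝓝 (N : ℝ)) := by
    have h0 : Tendsto (fun t : ℝ => ∑ i ∈ Finset.range N, Real.exp (-(t * lam i)))
        (𝓝 0) (𝓝 (∑ i ∈ Finset.range N, Real.exp (-((0:ℝ) * lam i)))) := by
      apply tendsto_finset_sum
      intro i _
      exact (Continuous.tendsto (by continuity) 0)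
    simp only [zero_mul, neg_zero, Real.exp_zero, Finset.sum_const, Finset.card_range,
      nsmul_eq_mul, mul_one] at h0
    exact h0.mono_left nhdsWithin_le_nhds
  have hev1 : ∀ᶠ t in 𝓝[>] (0:ℝ), M₀ < ∑ i ∈ Finset.range N, Real.exp (-(t * lam i)) :=
    hlim.eventually (lt_mem_nhds hNgt)
  have hev2 : Ioc (0:ℝ) δ ∈ 𝓝[>] (0:ℝ) :=
    Ioc_mem_nhdsGT_of_mem (Set.mem_Ico.2 ⟨le_refl 0, hδ⟩)
  obtain ⟨t, h1, h2⟩ := (hev1.and (eventually_of_mem hev2 (fun t ht => ht))).exists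
  have h3 : (∑ i ∈ Finset.range N, Real.exp (-(t * lam i))) ≤ ∑' n, Real.exp (-(t * lam n)) :=
    Summable.sum_le_tsum (Finset.range N) (fun i _ => (Real.exp_pos _).le) (hsum t h2.1)
  have h4 := hθub t h2.1 h2.2
  linarith


set_option maxHeartbeats 1000000 in
lemma final_form (lam : ℕ → ℝ) (hlam_pos : ∀ n, 0 < lam n)
    (hsum : ∀ t : ℝ, 0 < t → Summable fun n => Real.exp (-(t * lam n)))
    (c₀ s₀ s₁ : ℝ) (hs : s₁ < s₀) (hs₀ : 0 < s₀)
    (δ C : ℝ) (hδ : 0 < δ) (hδ1 : δ ≤ 1) (hC : 0 < C)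
    (hbound : ∀ t, 0 < t → t ≤ δ →
      |(∑' n, Real.exp (-(t * lam n))) - c₀ * t ^ (-s₀)| ≤ C * t ^ (-s₁)) :
    Tendsto (fun Λ : ℝ => (Real.log Λ / Λ) ^ s₀ *
        ∑' n, if lam n ≤ Λ then
          Real.exp (-(lam n * (Real.log Λ / Λ))) / (1 + lam n * (Real.log Λ / Λ)) else 0)
      atTop (𝓝 (Real.exp 1 * (c₀ * upperIncompleteGamma (1 - s₀) 1))) := by
  set M : ℝ := |c₀| + C with hM
  have hM0 : 0 < M := by positivity
  have hθle : ∀ t, 0 < t → t ≤ δ → (∑' n, Real.exp (-(t * lam n))) ≤ M * t ^ (-s₀) := by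
    intro t ht htδ
    have h1 := hbound t ht htδ
    have h2 : (∑' n, Real.exp (-(t * lam n))) - c₀ * t ^ (-s₀) ≤ C * t ^ (-s₁) := (abs_le.1 h1).2
    have h3 : t ^ (-s₁) ≤ t ^ (-s₀) :=
      Real.rpow_le_rpow_of_exponent_ge ht (le_trans htδ hδ1) (by linarith)
    have h4 : c₀ * t ^ (-s₀) ≤ |c₀| * t ^ (-s₀) :=
      mul_le_mul_of_nonneg_right (le_abs_self c₀) (Real.rpow_nonneg ht.le _)
    have h5 : C * t ^ (-s₁) ≤ C * t ^ (-s₀) := mul_le_mul_of_nonneg_left h3 hC.le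
    rw [hM]; nlinarith
  have hden : ∀ (n : ℕ) (e : ℝ), 0 < e → (0:ℝ) < 1 + lam n * e := by
    intro n e he; nlinarith [hlam_pos n]
  have hfle : ∀ (n : ℕ) (e : ℝ), 0 < e →
      Real.exp (-(lam n * e)) / (1 + lam n * e) ≤ Real.exp (-(lam n * e)) := by
    intro n e he
    apply div_le_self (Real.exp_pos _).le
    nlinarith [hlam_pos n]
  have hsum' : ∀ e : ℝ, 0 < e → Summable fun n => Real.exp (-(lam n * e)) :=
    fun e he => (hsum e he).congr (fun n => by rw [mul_comm])
  have hsumf : ∀ e : ℝ, 0 < e →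
      Summable fun n => Real.exp (-(lam n * e)) / (1 + lam n * e) := by
    intro e he
    exact Summable.of_nonneg_of_le
      (fun n => div_nonneg (Real.exp_pos _).le (hden n e he).le)
      (fun n => hfle n e he) (hsum' e he)
  have hsumS : ∀ (Λ e : ℝ), 0 < e →
      Summable fun n => if lam n ≤ Λ then
        Real.exp (-(lam n * e)) / (1 + lam n * e) else 0 := by
    intro Λ e he
    refine Summable.of_nonneg_of_le (fun n => ?_) (fun n => ?_) (hsumf e he)
    · split_ifs
      · exact div_nonneg (Real.exp_pos _).le (hden n e he).le
      · exact le_refl 0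
    · split_ifs
      · exact le_refl _
      · exact div_nonneg (Real.exp_pos _).le (hden n e he).le
  -- ε tends to 0 from the right
  have h0 : Tendsto (fun Λ : ℝ => Real.log Λ / Λ) atTop (𝓝 0) :=
    Real.isLittleO_log_id_atTop.tendsto_div_nhds_zero
  have hεlim : Tendsto (fun Λ : ℝ => Real.log Λ / Λ) atTop (𝓝[>] (0:ℝ)) := by
    rw [tendsto_nhdsWithin_iff]
    refine ⟨h0, ?_⟩
    filter_upwards [eventually_gt_atTop (1:ℝ)] with Λ hΛ
    exact div_pos (Real.log_pos hΛ) (by linarith)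
  have hA := (aux_main lam hlam_pos hsum c₀ s₀ s₁ hs hs₀ δ C hδ hδ1 hC hbound).comp hεlim
  simp only [Function.comp_def] at hA
  -- the tail estimate
  have hB : Tendsto (fun Λ : ℝ => (Real.log Λ / Λ) ^ s₀ *
      ((∑' n, Real.exp (-(lam n * (Real.log Λ / Λ))) / (1 + lam n * (Real.log Λ / Λ)))
        - ∑' n, if lam n ≤ Λ then
            Real.exp (-(lam n * (Real.log Λ / Λ))) / (1 + lam n * (Real.log Λ / Λ)) else 0))
      atTop (𝓝 0) := by
    apply squeeze_zero' (g := fun Λ : ℝ => (M * (2:ℝ) ^ s₀) * Λ ^ (-(2⁻¹:ℝ)))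
    · filter_upwards [eventually_gt_atTop (1:ℝ)] with Λ hΛ1
      have he0 : 0 < Real.log Λ / Λ := div_pos (Real.log_pos hΛ1) (by linarith)
      refine mul_nonneg (Real.rpow_nonneg he0.le _) (sub_nonneg.2 ?_)
      refine Summable.tsum_le_tsum (fun n => ?_) (hsumS Λ _ he0) (hsumf _ he0)
      split_ifs
      · exact le_refl _
      · exact div_nonneg (Real.exp_pos _).le (hden n _ he0).le
    · filter_upwards [eventually_gt_atTop (1:ℝ),
        h0.eventually_lt_const (by linarith : (0:ℝ) < 2 * δ)] with Λ hΛ1 he2δ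
      set e : ℝ := Real.log Λ / Λ with hedef
      have hΛ0 : (0:ℝ) < Λ := by linarith
      have he0 : 0 < e := div_pos (Real.log_pos hΛ1) hΛ0
      have heδ : e / 2 ≤ δ := by linarith
      have heΛ : e * Λ = Real.log Λ := div_mul_cancel₀ _ (ne_of_gt hΛ0)
      have hTS : (∑' n, Real.exp (-(lam n * e)) / (1 + lam n * e))
          - (∑' n, if lam n ≤ Λ then Real.exp (-(lam n * e)) / (1 + lam n * e) else 0)
          = ∑' n, (Real.exp (-(lam n * e)) / (1 + lam n * e)
              - if lam n ≤ Λ then Real.exp (-(lam n * e)) / (1 + lam n * e) else 0) :=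
        (Summable.tsum_sub (hsumf e he0) (hsumS Λ e he0)).symm
      have hterm : ∀ n, (Real.exp (-(lam n * e)) / (1 + lam n * e)
            - if lam n ≤ Λ then Real.exp (-(lam n * e)) / (1 + lam n * e) else 0)
          ≤ Real.exp (-(Real.log Λ / 2)) * Real.exp (-((e/2) * lam n)) := by
        intro n
        split_ifs with h
        · simp only [sub_self]
          positivity
        · push_neg at h
          rw [sub_zero, ← Real.exp_add]
          refine le_trans (hfle n e he0) (Real.exp_le_exp.2 ?_)
          have h1 : e * Λ ≤ e * lam n := mul_le_mul_of_nonneg_left h.le he0.le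
          rw [← heΛ] at *
          nlinarith
      have hsub : Summable fun n => (Real.exp (-(lam n * e)) / (1 + lam n * e)
          - if lam n ≤ Λ then Real.exp (-(lam n * e)) / (1 + lam n * e) else 0) :=
        (hsumf e he0).sub (hsumS Λ e he0)
      have hrhs : Summable fun n => Real.exp (-(Real.log Λ / 2)) * Real.exp (-((e/2) * lam n)) :=
        (hsum (e/2) (half_pos he0)).mul_left _
      have h2 := Summable.tsum_le_tsum hterm hsub hrhs
      rw [tsum_mul_left] at h2
      have h3 : (∑' n, Real.exp (-((e/2) * lam n))) ≤ M * (e/2) ^ (-s₀) :=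
        hθle (e/2) (half_pos he0) heδ
      have h4 : (e/2) ^ (-s₀) = e ^ (-s₀) * (2:ℝ) ^ s₀ := by
        rw [Real.div_rpow he0.le (by norm_num : (0:ℝ) ≤ 2),
          Real.rpow_neg (by norm_num : (0:ℝ) ≤ 2) s₀, div_eq_mul_inv, inv_inv]
      have h5 : Real.exp (-(Real.log Λ / 2)) = Λ ^ (-(2⁻¹:ℝ)) := by
        rw [Real.rpow_def_of_pos hΛ0]
        congr 1
        ring
      have h6 : e ^ s₀ * e ^ (-s₀) = 1 := by
        rw [← Real.rpow_add he0]; simp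
      calc e ^ s₀ * ((∑' n, Real.exp (-(lam n * e)) / (1 + lam n * e))
              - ∑' n, if lam n ≤ Λ then Real.exp (-(lam n * e)) / (1 + lam n * e) else 0)
          ≤ e ^ s₀ * (Real.exp (-(Real.log Λ / 2)) * (M * (e/2) ^ (-s₀))) := by
            rw [hTS]
            refine mul_le_mul_of_nonneg_left ?_ (Real.rpow_nonneg he0.le _)
            refine le_trans h2 (mul_le_mul_of_nonneg_left h3 (Real.exp_pos _).le)
        _ = (M * (2:ℝ) ^ s₀) * Λ ^ (-(2⁻¹:ℝ)) * (e ^ s₀ * e ^ (-s₀)) := by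
            rw [h4, h5]; ring
        _ = (M * (2:ℝ) ^ s₀) * Λ ^ (-(2⁻¹:ℝ)) := by rw [h6, mul_one]
    · have := (tendsto_rpow_neg_atTop (by norm_num : (0:ℝ) < 2⁻¹)).const_mul
        (M * (2:ℝ) ^ s₀)
      simpa using this
  have hcomb := hA.sub hB
  rw [sub_zero] at hcomb
  exact hcomb.congr (fun Λ => by ring)

theorem first_heat_coefficient_formula
    (lam : ℕ → ℝ) (hlam_mono : Monotone lam) (hlam_pos : ∀ n, 0 < lam n)
    (hsum : ∀ t : ℝ, 0 < t → Summable fun n => Real.exp (-(t * lam n)))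
    (c₀ s₀ s₁ : ℝ) (hs : s₁ < s₀)
    (htrace : (fun t : ℝ => (∑' n, Real.exp (-(t * lam n))) - c₀ * t ^ (-s₀))
        =O[𝓝[>] (0 : ℝ)] fun t : ℝ => t ^ (-s₁)) :
    Tendsto
      (fun Λ : ℝ =>
        (Real.log Λ / Λ) ^ s₀ / (Real.exp 1 * upperIncompleteGamma (1 - s₀) 1) *
          ∑' n, if lam n ≤ Λ then
            Real.exp (-(lam n * (Real.log Λ / Λ))) / (1 + lam n * (Real.log Λ / Λ))
          else 0)
      atTop (𝓝 c₀) := by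
  obtain ⟨δ, C, hδ, hδ1, hC, hbound⟩ := extract_bound lam c₀ s₀ s₁ htrace
  have hs₀ : 0 < s₀ := s0_pos lam hlam_pos hsum c₀ s₀ s₁ hs δ C hδ hδ1 hC hbound
  have hΓ : 0 < upperIncompleteGamma (1 - s₀) 1 := uig_pos hs₀
  have hF := final_form lam hlam_pos hsum c₀ s₀ s₁ hs hs₀ δ C hδ hδ1 hC hbound
  have hT := hF.div_const (Real.exp 1 * upperIncompleteGamma (1 - s₀) 1)
  have hval : Real.exp 1 * (c₀ * upperIncompleteGamma (1 - s₀) 1)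
      / (Real.exp 1 * upperIncompleteGamma (1 - s₀) 1) = c₀ := by
    have h1 : Real.exp 1 ≠ 0 := (Real.exp_pos 1).ne'
    have h2 : upperIncompleteGamma (1 - s₀) 1 ≠ 0 := hΓ.ne'
    field_simp
  rw [hval] at hT
  refine hT.congr (fun Λ => ?_)
  rw [div_mul_eq_mul_div]
end

section
/- Let (λ_n) be a nondecreasing sequence of positive reals with heat trace expansion ∑_n e^{-tλ_n} = ∑_{i=0}^k c_i t^{-s_i} + O(t^{-s_{k+1}}) as t → 0⁺. Define ζ(s) = ∑_n λ_n^{-s} for Re s > s_0. Then Γ(s)ζ(s) = ∫_0^∞ t^{s-1} (∑_n e^{-tλ_n}) dt for Re s > s_0, and Γ(s)ζ(s) extends meromorphically to Re s > s_{k+1} with simple poles exactly at those s_i with c_i ≠ 0, with residues Res_{s=s_i} Γ(s)ζ(s) = c_i. -/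
/-!
Since `Γ(z) λ^{-z} = ∫₀^∞ t^{z-1} e^{-tλ} dt`, summing over the spectrum identifies `Γ(z) ζ(z)` with
the Mellin transform of the heat trace `θ(t) = ∑ e^{-tλₙ}`; comparing partial sums of these
integrals with `∫ t^{z-1} θ` shows conversely that the Dirichlet series converges wherever the
Mellin integral does. As `θ(t) → ∞` when `t → 0⁺`, the expansion forces `s₀ > 0`.

For the continuation, subtract from `θ` its expansion `∑ cᵢ t^{-sᵢ}` cut off at `t = 1`. The
difference is `O(t^{-s_{k+1}})` at `0` and decays exponentially at `∞`, so its Mellin transform is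
holomorphic on `Re z > s_{k+1}`, while the cut-off power `cᵢ t^{-sᵢ} 𝟙_{(0,1]}` has Mellin
transform `cᵢ / (z - sᵢ)`.
-/

open MeasureTheory Filter Asymptotics Set Real Topology

theorem isBigO_rpow_neg_nhdsGT_zero {a b : ℝ} (hab : a ≤ b) :
    (fun t : ℝ => t ^ (-a)) =O[𝓝[>] 0] fun t => t ^ (-b) := by
  refine IsBigO.of_bound 1 ?_
  filter_upwards [Ioc_mem_nhdsGT zero_lt_one] with t ht
  rw [one_mul, norm_of_nonneg (rpow_nonneg ht.1.le _), norm_of_nonneg (rpow_nonneg ht.1.le _)]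
  exact rpow_le_rpow_of_exponent_ge ht.1 ht.2 (neg_le_neg hab)

theorem isBigO_rpow_of_sub_sum_isBigO {ι : Type*} [Fintype ι] {f : ℝ → ℝ} {c s : ι → ℝ}
    {σ b : ℝ} (h : (fun t => f t - ∑ i, c i * t ^ (-s i)) =O[𝓝[>] 0] (· ^ (-σ)))
    (hσ : σ ≤ b) (hs : ∀ i, s i ≤ b) : f =O[𝓝[>] 0] (· ^ (-b)) := by
  have hexp : (fun t => ∑ i, c i * t ^ (-s i)) =O[𝓝[>] 0] (· ^ (-b)) :=
    IsBigO.fun_sum fun i _ => (isBigO_rpow_neg_nhdsGT_zero (hs i)).const_mul_left _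
  simpa using (h.trans (isBigO_rpow_neg_nhdsGT_zero hσ)).add hexp

theorem MeasureTheory.LocallyIntegrableOn.indicator {X E : Type*} [TopologicalSpace X]
    [MeasurableSpace X] [NormedAddCommGroup E] {μ : Measure X} {f : X → E} {U A : Set X}
    (hf : LocallyIntegrableOn f U μ) (hA : MeasurableSet A) :
    LocallyIntegrableOn (A.indicator f) U μ := fun x hx =>
  let ⟨V, hV, hfV⟩ := hf x hx
  ⟨V, hV, hfV.indicator hA⟩

theorem hasMellin_sum {E ι : Type*} [NormedAddCommGroup E] [NormedSpace ℂ E] (u : Finset ι)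
    {f : ι → ℝ → E} {m : ι → E} {z : ℂ} (h : ∀ i ∈ u, HasMellin (f i) z (m i)) :
    HasMellin (fun t => ∑ i ∈ u, f i t) z (∑ i ∈ u, m i) := by
  refine ⟨?_, ?_⟩
  · simp only [MellinConvergent, Finset.smul_sum]
    exact integrable_finsetSum u fun i hi => (h i hi).1
  · rw [mellin]
    simp only [Finset.smul_sum]
    rw [integral_finsetSum u fun i hi => (h i hi).1]
    exact Finset.sum_congr rfl fun i hi => (h i hi).2

section CutoffExpansion

variable {ι : Type*} [Fintype ι] (c : ι → ℂ) (s : ι → ℝ)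

noncomputable def cutoffExpansion : ℝ → ℂ :=
  (Ioc 0 1).indicator fun t => ∑ i, c i * (t : ℂ) ^ (-(s i : ℂ))

theorem locallyIntegrableOn_cutoffExpansion :
    LocallyIntegrableOn (cutoffExpansion c s) (Ioi 0) := by
  refine (ContinuousOn.locallyIntegrableOn ?_ measurableSet_Ioi).indicator measurableSet_Ioc
  refine continuousOn_finsetSum _ fun i _ => continuousOn_const.mul fun t ht => ?_
  exact (Complex.continuousAt_ofReal_cpow_const _ _ (Or.inr (ne_of_gt ht))).continuousWithinAt

theorem hasMellin_cutoffExpansion {z : ℂ} (hz : ∀ i, s i < z.re) :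
    HasMellin (cutoffExpansion c s) z (∑ i, c i / (z - s i)) := by
  have hsplit : cutoffExpansion c s =
      fun t => ∑ i, c i • (Ioc 0 1).indicator (fun t : ℝ => (t : ℂ) ^ (-(s i : ℂ))) t := by
    ext t
    by_cases ht : t ∈ Ioc 0 1 <;> simp [cutoffExpansion, ht]
  rw [hsplit]
  refine hasMellin_sum _ fun i _ => ?_
  have hpow := hasMellin_cpow_Ioc (-(s i : ℂ)) (s := z) (by simpa using hz i)
  refine ⟨hpow.1.const_smul (c i), ?_⟩
  rw [mellin_const_smul, hpow.2, smul_eq_mul, ← sub_eq_add_neg, mul_one_div]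

end CutoffExpansion

theorem exists_analyticOn_mellin_eq_add_sum_div {ι : Type*} [Fintype ι] {f : ℝ → ℂ}
    {c : ι → ℂ} {s : ι → ℝ} {a σ : ℝ} (ha : 0 < a) (hf : LocallyIntegrableOn f (Ioi 0))
    (htop : f =O[atTop] fun t => exp (-a * t))
    (hbot : (fun t => f t - ∑ i, c i * (t : ℂ) ^ (-(s i : ℂ))) =O[𝓝[>] 0] (· ^ (-σ))) :
    ∃ G : ℂ → ℂ, AnalyticOn ℂ G {z | σ < z.re} ∧
      ∀ z : ℂ, σ < z.re → (∀ i, s i < z.re) → mellin f z = G z + ∑ i, c i / (z - s i) := by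
  set g := f - cutoffExpansion c s
  have hg_loc : LocallyIntegrableOn g (Ioi 0) := hf.sub (locallyIntegrableOn_cutoffExpansion c s)
  have hg_top : g =O[atTop] fun t => exp (-a * t) := by
    refine htop.congr' ?_ EventuallyEq.rfl
    filter_upwards [eventually_gt_atTop 1] with t ht
    simp [g, cutoffExpansion, indicator_of_notMem (fun h : t ∈ Ioc 0 1 => not_le.2 ht h.2)]
  have hg_bot : g =O[𝓝[>] 0] (· ^ (-σ)) := by
    refine hbot.congr' ?_ EventuallyEq.rfl
    filter_upwards [Ioc_mem_nhdsGT zero_lt_one] with t ht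
    simp [g, cutoffExpansion, indicator_of_mem ht]
  refine ⟨mellin g, ?_, fun z hσz hz => ?_⟩
  · refine (DifferentiableOn.analyticOnNhd (fun z hz => ?_)
      (isOpen_lt continuous_const Complex.continuous_re)).analyticOn
    exact (mellin_differentiableAt_of_isBigO_rpow_exp ha hg_loc hg_top hg_bot hz
      ).differentiableWithinAt
  · have hsum := hasMellin_add (mellinConvergent_of_isBigO_rpow_exp ha hg_loc hg_top hg_bot hσz)
      (hasMellin_cutoffExpansion c s hz).1
    simp only [g, Pi.sub_apply, sub_add_cancel] at hsum
    rw [hsum.2, (hasMellin_cutoffExpansion c s hz).2]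

noncomputable def heatTrace (lam : ℕ → ℝ) (t : ℝ) : ℝ :=
  ∑' n, exp (-(t * lam n))

section HeatTrace

variable {lam : ℕ → ℝ}

theorem heatTrace_nonneg (t : ℝ) : 0 ≤ heatTrace lam t :=
  tsum_nonneg fun _ => (exp_pos _).le

theorem continuousOn_heatTrace (hlam : ∀ n, 0 ≤ lam n)
    (hsum : ∀ t : ℝ, 0 < t → Summable fun n => exp (-(t * lam n))) :
    ContinuousOn (heatTrace lam) (Ioi 0) := by
  intro t ht
  have hcont : ContinuousOn (heatTrace lam) (Ici (t / 2)) := by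
    refine continuousOn_tsum (fun n => by fun_prop) (hsum _ (half_pos ht)) fun n u hu => ?_
    rw [norm_of_nonneg (exp_pos _).le]
    exact exp_le_exp.2 (neg_le_neg (mul_le_mul_of_nonneg_right hu (hlam n)))
  exact (hcont.continuousAt (Ici_mem_nhds (half_lt_self ht))).continuousWithinAt

theorem heatTrace_isBigO_exp_atTop {a : ℝ} (hmin : ∀ n, a ≤ lam n)
    (hsum : ∀ t : ℝ, 0 < t → Summable fun n => exp (-(t * lam n))) :
    heatTrace lam =O[atTop] fun t => exp (-a * t) := by
  refine IsBigO.of_bound (exp a * heatTrace lam 1) ?_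
  filter_upwards [eventually_ge_atTop 1] with t ht
  rw [norm_of_nonneg (heatTrace_nonneg t), norm_of_nonneg (exp_pos _).le]
  -- the exponents differ by `(t - 1) (lam n - a) ≥ 0`
  have hterm : ∀ n, exp (-(t * lam n)) ≤ exp a * exp (-a * t) * exp (-(1 * lam n)) := by
    intro n
    rw [← exp_add, ← exp_add]
    exact exp_le_exp.2 (by nlinarith [hmin n])
  calc heatTrace lam t ≤ ∑' n, exp a * exp (-a * t) * exp (-(1 * lam n)) :=
        (hsum t (by linarith)).tsum_le_tsum hterm ((hsum 1 one_pos).mul_left _)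
    _ = exp a * heatTrace lam 1 * exp (-a * t) := by
        rw [tsum_mul_left, heatTrace]
        ring

theorem tendsto_heatTrace_nhdsGT_zero
    (hsum : ∀ t : ℝ, 0 < t → Summable fun n => exp (-(t * lam n))) :
    Tendsto (heatTrace lam) (𝓝[>] 0) atTop := by
  refine tendsto_atTop.2 fun b => ?_
  obtain ⟨N, hN⟩ := exists_nat_gt b
  have hpartial : Tendsto (fun t => ∑ n ∈ Finset.range N, exp (-(t * lam n))) (𝓝[>] 0) (𝓝 N) := by
    have hcont : Continuous fun t : ℝ => ∑ n ∈ Finset.range N, exp (-(t * lam n)) := by fun_prop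
    simpa using (hcont.tendsto 0).mono_left nhdsWithin_le_nhds
  filter_upwards [hpartial.eventually (eventually_gt_nhds hN), self_mem_nhdsWithin] with t hb ht
  exact hb.le.trans ((hsum t ht).sum_le_tsum _ fun n _ => (exp_pos _).le)

theorem pos_of_heatTrace_isBigO_rpow {b : ℝ}
    (hsum : ∀ t : ℝ, 0 < t → Summable fun n => exp (-(t * lam n)))
    (hbot : heatTrace lam =O[𝓝[>] 0] (· ^ (-b))) : 0 < b := by
  by_contra! hb
  have hbdd : heatTrace lam =O[𝓝[>] 0] fun _ => (1 : ℝ) := by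
    simpa using hbot.trans (isBigO_rpow_neg_nhdsGT_zero hb)
  exact not_isBoundedUnder_of_tendsto_atTop
    (tendsto_abs_atTop_atTop.comp (tendsto_heatTrace_nhdsGT_zero hsum))
    ((isBigO_one_iff ℝ).1 hbdd)

theorem summable_one_div_rpow_of_integrableOn_heatTrace (hlam : ∀ n, 0 < lam n)
    (hsum : ∀ t : ℝ, 0 < t → Summable fun n => exp (-(t * lam n))) {x : ℝ} (hx : 0 < x)
    (hint : IntegrableOn (fun t => t ^ (x - 1) * heatTrace lam t) (Ioi 0)) :
    Summable fun n => 1 / lam n ^ x := by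
  have hterm : ∀ n, IntegrableOn (fun t => t ^ (x - 1) * exp (-(t * lam n))) (Ioi 0) := by
    intro n
    simpa [mul_comm] using
      integrableOn_rpow_mul_exp_neg_mul_rpow (by linarith : -1 < x - 1) one_pos (hlam n)
  have hgamma : ∀ n, ∫ t in Ioi 0, t ^ (x - 1) * exp (-(t * lam n)) =
      Real.Gamma x * (1 / lam n ^ x) := by
    intro n
    simp_rw [mul_comm _ (lam n)]
    rw [integral_rpow_mul_exp_neg_mul_Ioi hx (hlam n), div_rpow zero_le_one (hlam n).le, one_rpow,
      mul_comm]
  refine (summable_mul_left_iff (Gamma_pos_of_pos hx).ne').1 <|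
    summable_of_sum_range_le (c := ∫ t in Ioi 0, t ^ (x - 1) * heatTrace lam t)
      (fun n => by have := hlam n; positivity) fun N => ?_
  calc ∑ n ∈ Finset.range N, Real.Gamma x * (1 / lam n ^ x)
      = ∫ t in Ioi 0, ∑ n ∈ Finset.range N, t ^ (x - 1) * exp (-(t * lam n)) := by
        rw [integral_finsetSum _ fun n _ => hterm n]
        simp_rw [hgamma]
    _ ≤ ∫ t in Ioi 0, t ^ (x - 1) * heatTrace lam t := by
        refine setIntegral_mono_on (integrable_finsetSum _ fun n _ => hterm n) hint
          measurableSet_Ioi fun t (ht : 0 < t) => ?_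
        rw [← Finset.mul_sum]
        exact mul_le_mul_of_nonneg_left
          ((hsum t ht).sum_le_tsum _ fun n _ => (exp_pos _).le) (rpow_nonneg ht.le _)

end HeatTrace

theorem Gamma_mul_tsum_cpow_neg_eq_mellin_heatTrace {lam : ℕ → ℝ} {a b : ℝ} (ha : 0 < a)
    (hmin : ∀ n, a ≤ lam n) (hsum : ∀ t : ℝ, 0 < t → Summable fun n => exp (-(t * lam n)))
    (hbot : heatTrace lam =O[𝓝[>] 0] (· ^ (-b))) {z : ℂ} (hz : b < z.re) :
    Complex.Gamma z * ∑' n, (lam n : ℂ) ^ (-z) = mellin (fun t => (heatTrace lam t : ℂ)) z := by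
  have hlam : ∀ n, 0 < lam n := fun n => ha.trans_le (hmin n)
  have hz0 : 0 < z.re := (pos_of_heatTrace_isBigO_rpow hsum hbot).trans hz
  have hint : IntegrableOn (fun t => t ^ (z.re - 1) * heatTrace lam t) (Ioi 0) :=
    mellin_convergent_of_isBigO_scalar
      ((continuousOn_heatTrace (fun n => (hlam n).le) hsum).locallyIntegrableOn measurableSet_Ioi)
      ((heatTrace_isBigO_exp_atTop hmin hsum).trans (isLittleO_exp_neg_mul_rpow_atTop ha _).isBigO)
      (lt_add_one _) hbot hz
  have hF : ∀ t ∈ Ioi (0 : ℝ),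
      HasSum (fun n => (1 : ℂ) * rexp (-lam n * t)) (heatTrace lam t : ℂ) := by
    intro t ht
    simpa [heatTrace, mul_comm t] using Complex.hasSum_ofReal.2 (hsum t ht).hasSum
  have hmellin := hasSum_mellin (fun n => Or.inr (hlam n)) hz0 hF (by
    simpa using summable_one_div_rpow_of_integrableOn_heatTrace hlam hsum hz0 hint)
  rw [← tsum_mul_left, ← hmellin.tsum_eq]
  simp [Complex.cpow_neg, div_eq_mul_inv]

theorem spectral_zeta_mellin_and_continuation
    (k : ℕ) (s : Fin (k + 2) → ℝ) (hs : ∀ i j : Fin (k + 2), i < j → s j < s i)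
    (c : Fin (k + 1) → ℝ)
    (lam : ℕ → ℝ) (hlam_mono : Monotone lam) (hlam_pos : ∀ n, 0 < lam n)
    (hsum : ∀ t : ℝ, 0 < t → Summable fun n => Real.exp (-(t * lam n)))
    (htrace : (fun t : ℝ =>
        (∑' n, Real.exp (-(t * lam n))) -
          ∑ i : Fin (k + 1), c i * t ^ (-(s i.castSucc)))
        =O[𝓝[>] (0 : ℝ)] fun t : ℝ => t ^ (-(s (Fin.last (k + 1)))))
    (zeta : ℂ → ℂ)
    (hzeta : ∀ z : ℂ, (s 0 : ℝ) < z.re → zeta z = ∑' n, (lam n : ℂ) ^ (-z)) :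
    (∀ z : ℂ, (s 0 : ℝ) < z.re →
        Complex.Gamma z * zeta z =
          ∫ t in Set.Ioi (0 : ℝ),
            (t : ℂ) ^ (z - 1) * ((∑' n, Real.exp (-(t * lam n)) : ℝ) : ℂ)) ∧
    ∃ G : ℂ → ℂ, AnalyticOn ℂ G {z : ℂ | (s (Fin.last (k + 1)) : ℝ) < z.re} ∧
      ∀ z : ℂ, (s 0 : ℝ) < z.re →
        Complex.Gamma z * zeta z =
          G z + ∑ i : Fin (k + 1), (c i : ℂ) / (z - (s i.castSucc : ℝ)) := by
  have hanti : StrictAnti s := hs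
  have hs_le : ∀ i : Fin (k + 1), s i.castSucc ≤ s 0 := fun i => hanti.antitone (Fin.zero_le _)
  have hlast_lt : ∀ i : Fin (k + 1), s (Fin.last (k + 1)) < s i.castSucc :=
    fun i => hanti (Fin.castSucc_lt_last i)
  have hmin : ∀ n, lam 0 ≤ lam n := fun n => hlam_mono n.zero_le
  have hmellin : ∀ z : ℂ, s 0 < z.re →
      Complex.Gamma z * zeta z = mellin (fun t => (heatTrace lam t : ℂ)) z := fun z hz => by
    rw [hzeta z hz]
    exact Gamma_mul_tsum_cpow_neg_eq_mellin_heatTrace (hlam_pos 0) hmin hsum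
      (isBigO_rpow_of_sub_sum_isBigO htrace ((hlast_lt 0).le.trans (hs_le 0)) hs_le) hz
  have htraceC : (fun t => (heatTrace lam t : ℂ) -
      ∑ i, (c i : ℂ) * (t : ℂ) ^ (-((s i.castSucc : ℝ) : ℂ))) =O[𝓝[>] 0]
      (· ^ (-s (Fin.last (k + 1)))) := by
    refine (Complex.isBigO_ofReal_left.2 htrace).congr' ?_ EventuallyEq.rfl
    filter_upwards [self_mem_nhdsWithin] with t (ht : 0 < t)
    push_cast [heatTrace, Complex.ofReal_cpow ht.le]
    rfl
  obtain ⟨G, hG, hGeq⟩ := exists_analyticOn_mellin_eq_add_sum_div (hlam_pos 0)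
    ((Complex.continuous_ofReal.comp_continuousOn
      (continuousOn_heatTrace (fun n => (hlam_pos n).le) hsum)).locallyIntegrableOn
      measurableSet_Ioi)
    (Complex.isBigO_ofReal_left.2 (heatTrace_isBigO_exp_atTop hmin hsum)) htraceC
  refine ⟨hmellin, G, hG, fun z hz => ?_⟩
  rw [hmellin z hz]
  exact hGeq z ((hlast_lt 0).trans_le (hs_le 0) |>.trans hz) fun i => (hs_le i).trans_lt hz
end
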